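/- arXiv:0807.0914 — 6 statements merged into one kernel-verified Lean document; each statement's English description precedes it below -/
import Mathlib

section
/- For fixed multisets S and T of elements of [n], if every element of T has multiplicity 1 (i.e., T is a set), then the joint statistic (cros₂, nest₂) is symmetrically distributed over the set of simple graphs G on [n] with left(G) = S and right(G) = T. -/
/-- The set of all possible arcs `(i,j)` with `1 ≤ i < j ≤ n`. -/
def edgesOn (n : ℕ) : Finset (ℕ × ℕ) :=
  (Finset.Icc 1 n ×ˢ Finset.Icc 1 n).filter fun e => e.1 < e.2

/-- The multiset of lefthand endpoints of the arcs of `G`. -/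
def leftM (G : Finset (ℕ × ℕ)) : Multiset ℕ := G.val.map Prod.fst

/-- The multiset of righthand endpoints of the arcs of `G`. -/
def rightM (G : Finset (ℕ × ℕ)) : Multiset ℕ := G.val.map Prod.snd

/-- Number of 2-crossings: pairs of arcs `(i₁,j₁), (i₂,j₂)` with `i₁ < i₂ < j₁ < j₂`. -/
def cros2 (G : Finset (ℕ × ℕ)) : ℕ :=
  ((G ×ˢ G).filter fun p => p.1.1 < p.2.1 ∧ p.2.1 < p.1.2 ∧ p.1.2 < p.2.2).card

/-- Number of 2-nestings: pairs of arcs `(i₁,j₁), (i₂,j₂)` with `i₁ < i₂ < j₂ < j₁`. -/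
def nest2 (G : Finset (ℕ × ℕ)) : ℕ :=
  ((G ×ˢ G).filter fun p => p.1.1 < p.2.1 ∧ p.2.1 < p.2.2 ∧ p.2.2 < p.1.2).card

namespace CN
open Finset MvPolynomial

abbrev P2 := MvPolynomial (Fin 2) ℤ
noncomputable def q : P2 := X 0
noncomputable def p : P2 := X 1
noncomputable def box (n : ℕ) : P2 := ∑ i ∈ range n, q ^ i * p ^ (n - 1 - i)
noncomputable def fbox (n : ℕ) : P2 := ∏ i ∈ range n, box (i + 1)
noncomputable def Mpoly (S : Multiset ℕ) : P2 := ∏ v ∈ S.toFinset, fbox (S.count v)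

lemma box_zero : box 0 = 0 := by simp [box]

lemma fbox_zero : fbox 0 = 1 := by simp [fbox]

lemma fbox_succ (n : ℕ) : fbox (n + 1) = fbox n * box (n + 1) := by
  simp [fbox, Finset.prod_range_succ]

-- counting lemmas on sorted lists
lemma sorted_count_bounds {L : List ℕ} (hL : L.Pairwise (· ≤ ·)) :
    ∀ j : ℕ, ∀ hj : j < L.length,
      L.countP (fun y => decide (y < L[j])) ≤ j ∧
      j < L.countP (fun y => decide (y < L[j])) + L.count L[j] := by
  induction L with
  | nil => intro j hj; simp at hj
  | cons x L' ih =>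
    intro j hj
    rcases List.pairwise_cons.mp hL with ⟨hx, hL'⟩
    match j with
    | 0 =>
      simp only [List.getElem_cons_zero, List.countP_cons, List.count_cons_self]
      have h0 : L'.countP (fun y => decide (y < x)) = 0 := by
        rw [List.countP_eq_zero]
        intro a ha
        simpa using not_lt.mpr (hx a ha)
      simp [h0]
    | j + 1 =>
      have hj' : j < L'.length := by simpa using hj
      have hget : (x :: L')[j+1] = L'[j] := by simp
      obtain ⟨h1, h2⟩ := ih hL' j hj'
      have hxle : x ≤ L'[j] := hx _ (List.getElem_mem hj')
      rw [hget, List.countP_cons, List.count_cons]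
      simp only [decide_eq_true_eq, beq_iff_eq]
      split_ifs <;> constructor <;> omega

def av (P : Multiset ℕ) (v : ℕ) : ℕ := Multiset.card (P.filter (fun y => v < y))
def bv (P : Multiset ℕ) (v : ℕ) : ℕ := Multiset.card (P.filter (fun y => y < v))

lemma bv_add_count_le {P : Multiset ℕ} {w v : ℕ} (h : w < v) :
    bv P w + P.count w ≤ bv P v := by
  have e1 := Multiset.filter_add_filter (fun y => y < w) (fun y => w = y) P
  have e2 : P.filter (fun y => y < w ∧ w = y) = 0 := by
    rw [Multiset.filter_eq_nil]
    intro a _ ⟨h1, h2⟩; omega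
  have e3 : Multiset.card (P.filter (fun y => y < w ∨ w = y)) ≤ bv P v := by
    apply Multiset.card_le_card
    apply Multiset.monotone_filter_right
    intro b hb; omega
  rw [e2, add_zero] at e1
  have := congrArg Multiset.card e1
  rw [Multiset.card_add] at this
  rw [bv, Multiset.count_eq_card_filter_eq]
  omega

lemma part_eq (P : Multiset ℕ) (v : ℕ) :
    bv P v + P.count v + av P v = Multiset.card P := by
  have e0 := Multiset.filter_add_not (fun y => y < v) P
  have e1 := Multiset.filter_add_filter (fun y => v = y) (fun y => v < y) P
  have e2 : P.filter (fun y => v = y ∧ v < y) = 0 := by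
    rw [Multiset.filter_eq_nil]
    intro a _ ⟨h1, h2⟩; omega
  have e3 : P.filter (fun y => v = y ∨ v < y) = P.filter (fun y => ¬ y < v) := by
    apply Multiset.filter_congr
    intro a _; constructor <;> (intro; omega)
  rw [e2, add_zero, e3] at e1
  have c0 := congrArg Multiset.card e0
  have c1 := congrArg Multiset.card e1
  rw [Multiset.card_add] at c0 c1
  rw [bv, av, Multiset.count_eq_card_filter_eq]
  omega

lemma bv_le_getD {P : Multiset ℕ} {j : ℕ} (hj : j < Multiset.card P) :
    bv P ((P.sort (· ≤ ·)).getD j 0) ≤ j ∧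
      j < bv P ((P.sort (· ≤ ·)).getD j 0) + P.count ((P.sort (· ≤ ·)).getD j 0) := by
  set L := P.sort (· ≤ ·) with hL
  have hlen : L.length = Multiset.card P := by
    rw [← Multiset.coe_card, hL, Multiset.sort_eq]
  have hj' : j < L.length := by omega
  have hg : L.getD j 0 = L[j] := List.getD_eq_getElem L 0 hj'
  have hcoe : (L : Multiset ℕ) = P := by rw [hL, Multiset.sort_eq]
  have hb : bv P L[j] = L.countP (fun y => decide (y < L[j])) := by
    rw [bv, ← hcoe, ← Multiset.countP_eq_card_filter, Multiset.coe_countP]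
  have hc : P.count L[j] = L.count L[j] := by rw [← hcoe, Multiset.coe_count]
  obtain ⟨h1, h2⟩ := sorted_count_bounds (Multiset.pairwise_sort _ _) j hj'
  rw [hg, hb, hc]
  exact ⟨h1, h2⟩

lemma getD_sort {P : Multiset ℕ} {v i : ℕ} (hv : v ∈ P) (hi : i < P.count v) :
    (P.sort (· ≤ ·)).getD (bv P v + i) 0 = v := by
  have hlt : bv P v + i < Multiset.card P := by
    have := part_eq P v
    omega
  obtain ⟨h1, h2⟩ := bv_le_getD hlt
  set w := (P.sort (· ≤ ·)).getD (bv P v + i) 0 with hw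
  rcases lt_trichotomy w v with h | h | h
  · have := bv_add_count_le (P := P) h
    omega
  · exact h
  · have := bv_add_count_le (P := P) h
    omega

lemma keyB' (P : Multiset ℕ) :
    ∑ v ∈ P.toFinset, q ^ av P v * p ^ bv P v * box (P.count v)
      = box (Multiset.card P) := by
  set h := Multiset.card P with hh
  have rhs : box h = ∑ j ∈ range h, q ^ (h - 1 - j) * p ^ j := by
    rw [box, ← Finset.sum_range_reflect]
    apply Finset.sum_congr rfl
    intro j hj
    rw [Finset.mem_range] at hj
    have : h - 1 - (h - 1 - j) = j := by omega
    rw [this]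
  have lhs : ∀ v ∈ P.toFinset,
      q ^ av P v * p ^ bv P v * box (P.count v)
        = ∑ i ∈ range (P.count v), q ^ (av P v + (P.count v - 1 - i)) * p ^ (bv P v + i) := by
    intro v hv
    rw [box, Finset.mul_sum, ← Finset.sum_range_reflect]
    apply Finset.sum_congr rfl
    intro i hi
    rw [Finset.mem_range] at hi
    have e1 : P.count v - 1 - (P.count v - 1 - i) = i := by omega
    rw [e1, pow_add, pow_add]
    ring
  rw [Finset.sum_congr rfl lhs, rhs, Finset.sum_sigma']
  apply Finset.sum_nbij' (i := fun s => bv P s.1 + s.2)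
    (j := fun j => ⟨(P.sort (· ≤ ·)).getD j 0, j - bv P ((P.sort (· ≤ ·)).getD j 0)⟩)
  · intro s hs
    rw [Finset.mem_sigma] at hs
    obtain ⟨hv, hi⟩ := hs
    rw [Multiset.mem_toFinset] at hv
    rw [Finset.mem_range] at hi
    rw [Finset.mem_range]
    have := part_eq P s.1
    omega
  · intro j hj
    rw [Finset.mem_range] at hj
    obtain ⟨h1, h2⟩ := bv_le_getD (hh ▸ hj)
    rw [Finset.mem_sigma, Multiset.mem_toFinset, Finset.mem_range]
    dsimp only
    constructor
    · have : 0 < P.count ((P.sort (· ≤ ·)).getD j 0) := by omega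
      exact Multiset.count_pos.mp this
    · omega
  · intro s hs
    rw [Finset.mem_sigma] at hs
    obtain ⟨hv, hi⟩ := hs
    rw [Multiset.mem_toFinset] at hv
    rw [Finset.mem_range] at hi
    have hg := getD_sort hv hi
    apply Sigma.ext
    · simpa using hg
    · simp only [hg]
      simp
  · intro j hj
    rw [Finset.mem_range] at hj
    obtain ⟨h1, h2⟩ := bv_le_getD (hh ▸ hj)
    dsimp only
    omega
  · intro s hs
    rw [Finset.mem_sigma] at hs
    obtain ⟨hv, hi⟩ := hs
    rw [Multiset.mem_toFinset] at hv
    rw [Finset.mem_range] at hi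
    have hpart := part_eq P s.1
    have e1 : av P s.1 + (P.count s.1 - 1 - s.2) = h - 1 - (bv P s.1 + s.2) := by omega
    rw [e1]

def alphaC (S : Multiset ℕ) (c v : ℕ) : ℕ := Multiset.card (S.filter (fun y => v < y ∧ y < c))
def betaC (S : Multiset ℕ) (v : ℕ) : ℕ := Multiset.card (S.filter (fun y => y < v))

noncomputable def Phi : List ℕ → Multiset ℕ → P2
  | [], S => if S = 0 then 1 else 0
  | c :: cs, S =>
      ∑ v ∈ (S.filter (· < c)).toFinset, q ^ alphaC S c v * p ^ betaC S v * Phi cs (S.erase v)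

lemma keyB (S : Multiset ℕ) (c : ℕ) :
    ∑ v ∈ (S.filter (· < c)).toFinset, q ^ alphaC S c v * p ^ betaC S v * box (S.count v)
      = box (Multiset.card (S.filter (· < c))) := by
  rw [← keyB' (S.filter (· < c))]
  apply Finset.sum_congr rfl
  intro v hv
  rw [Multiset.mem_toFinset, Multiset.mem_filter] at hv
  obtain ⟨hvS, hvc⟩ := hv
  have e1 : alphaC S c v = av (S.filter (· < c)) v := by
    rw [alphaC, av, Multiset.filter_filter]
  have e2 : betaC S v = bv (S.filter (· < c)) v := by
    rw [betaC, bv, Multiset.filter_filter]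
    congr 1
    apply Multiset.filter_congr
    intro y _
    constructor
    · intro hy; exact ⟨hy, lt_trans hy hvc⟩
    · intro hy; exact hy.1
  have e3 : S.count v = (S.filter (· < c)).count v := by
    rw [Multiset.count_filter, if_pos hvc]
  rw [e1, e2, e3]

lemma Mpoly_erase {S : Multiset ℕ} {v : ℕ} (hv : v ∈ S) :
    Mpoly S = box (S.count v) * Mpoly (S.erase v) := by
  have hsub : (S.erase v).toFinset ⊆ S.toFinset := by
    intro w hw
    rw [Multiset.mem_toFinset] at hw ⊢
    exact Multiset.mem_of_mem_erase hw
  have e0 : Mpoly (S.erase v) = ∏ w ∈ S.toFinset, fbox ((S.erase v).count w) := by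
    rw [Mpoly]
    apply Finset.prod_subset hsub
    intro w _ hw
    rw [Multiset.mem_toFinset] at hw
    rw [Multiset.count_eq_zero_of_notMem hw, fbox_zero]
  have hvf : v ∈ S.toFinset := Multiset.mem_toFinset.mpr hv
  rw [Mpoly, e0, ← Finset.mul_prod_erase _ _ hvf, ← Finset.mul_prod_erase _ (fun w => fbox ((S.erase v).count w)) hvf]
  have e1 : ∀ w ∈ S.toFinset.erase v, (S.erase v).count w = S.count w := by
    intro w hw
    exact Multiset.count_erase_of_ne (Finset.ne_of_mem_erase hw) S
  rw [Finset.prod_congr rfl (fun w hw => congrArg fbox (e1 w hw))]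
  rw [Multiset.count_erase_self]
  have hpos : 0 < S.count v := Multiset.count_pos.mpr hv
  obtain ⟨m, hm⟩ : ∃ m, S.count v = m + 1 := ⟨S.count v - 1, by omega⟩
  rw [hm]
  simp only [Nat.add_sub_cancel]
  rw [fbox_succ]
  ring

noncomputable def Rprod (cs : List ℕ) (S : Multiset ℕ) : P2 :=
  ∏ i ∈ range cs.length, box (Multiset.card (S.filter (· < cs.getD i 0)) - i)

lemma filter_erase_card {S : Multiset ℕ} {v : ℕ} (hv : v ∈ S) {d : ℕ} (hvd : v < d) :
    Multiset.card ((S.erase v).filter (· < d)) = Multiset.card (S.filter (· < d)) - 1 := by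
  conv_rhs => rw [← Multiset.cons_erase hv]
  rw [Multiset.filter_cons_of_pos (p := fun x => x < d) _ hvd, Multiset.card_cons]
  omega

theorem phi_mul (cs : List ℕ) : ∀ S : Multiset ℕ, List.Pairwise (· < ·) cs →
    Multiset.card S = cs.length → Phi cs S * Mpoly S = Rprod cs S := by
  induction cs with
  | nil =>
    intro S _ hc
    have : S = 0 := Multiset.card_eq_zero.mp hc
    subst this
    simp [Phi, Mpoly, Rprod]
  | cons c cs ih =>
    intro S hs hc
    rcases List.pairwise_cons.mp hs with ⟨hcall, hs'⟩
    have step : ∀ v ∈ (S.filter (· < c)).toFinset,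
        q ^ alphaC S c v * p ^ betaC S v * Phi cs (S.erase v) * Mpoly S
          = q ^ alphaC S c v * p ^ betaC S v * box (S.count v) *
              (∏ i ∈ range cs.length,
                box (Multiset.card (S.filter (· < cs.getD i 0)) - (i + 1))) := by
      intro v hv
      rw [Multiset.mem_toFinset, Multiset.mem_filter] at hv
      obtain ⟨hvS, hvc⟩ := hv
      have hcard : Multiset.card (S.erase v) = cs.length := by
        rw [Multiset.card_erase_of_mem hvS]
        simp at hc ⊢
        omega
      have hrec := ih (S.erase v) hs' hcard
      have e2 : Rprod cs (S.erase v)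
          = ∏ i ∈ range cs.length,
              box (Multiset.card (S.filter (· < cs.getD i 0)) - (i + 1)) := by
        rw [Rprod]
        apply Finset.prod_congr rfl
        intro i hi
        rw [Finset.mem_range] at hi
        have hmem : cs.getD i 0 ∈ cs := by
          rw [List.getD_eq_getElem cs 0 hi]
          exact List.getElem_mem hi
        have hvd : v < cs.getD i 0 := lt_trans hvc (hcall _ hmem)
        rw [filter_erase_card hvS hvd, Nat.sub_sub]
        congr 1
        omega
      rw [Mpoly_erase hvS]
      calc q ^ alphaC S c v * p ^ betaC S v * Phi cs (S.erase v) *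
            (box (S.count v) * Mpoly (S.erase v))
          = q ^ alphaC S c v * p ^ betaC S v * box (S.count v) *
            (Phi cs (S.erase v) * Mpoly (S.erase v)) := by ring
        _ = _ := by rw [hrec, e2]
    rw [Phi, Finset.sum_mul, Finset.sum_congr rfl step, ← Finset.sum_mul, keyB]
    rw [Rprod]
    have : (c :: cs).length = cs.length + 1 := rfl
    rw [this, Finset.prod_range_succ']
    simp only [List.getD_cons_succ, List.getD_cons_zero, Nat.sub_zero]
    ring

noncomputable def sw : P2 →ₐ[ℤ] P2 := rename (Equiv.swap 0 1)

lemma sw_q : sw q = p := by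
  rw [sw, q, p, rename_X, Equiv.swap_apply_left]

lemma sw_p : sw p = q := by
  rw [sw, q, p, rename_X, Equiv.swap_apply_right]

lemma sw_box (n : ℕ) : sw (box n) = box n := by
  rw [box, map_sum]
  simp only [map_mul, map_pow, sw_q, sw_p]
  rw [← Finset.sum_range_reflect (fun i => p ^ i * q ^ (n - 1 - i)) n]
  apply Finset.sum_congr rfl
  intro i hi
  rw [Finset.mem_range] at hi
  have e : n - 1 - (n - 1 - i) = i := by omega
  rw [e, mul_comm]

lemma sw_fbox (n : ℕ) : sw (fbox n) = fbox n := by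
  rw [fbox, map_prod]
  exact Finset.prod_congr rfl fun i _ => sw_box _

lemma sw_Mpoly (S : Multiset ℕ) : sw (Mpoly S) = Mpoly S := by
  rw [Mpoly, map_prod]
  exact Finset.prod_congr rfl fun i _ => sw_fbox _

lemma sw_Rprod (cs : List ℕ) (S : Multiset ℕ) : sw (Rprod cs S) = Rprod cs S := by
  rw [Rprod, map_prod]
  exact Finset.prod_congr rfl fun i _ => sw_box _

lemma Mpoly_ne_zero (S : Multiset ℕ) : Mpoly S ≠ 0 := by
  intro h
  have := congrArg (eval (fun _ : Fin 2 => (1 : ℤ))) h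
  rw [map_zero, Mpoly] at this
  rw [map_prod] at this
  have hpos : ∀ v ∈ S.toFinset, 0 < eval (fun _ : Fin 2 => (1 : ℤ)) (fbox (S.count v)) := by
    intro v _
    rw [fbox, map_prod]
    apply Finset.prod_pos
    intro i _
    rw [box, map_sum]
    have : ∀ j ∈ range (i + 1), eval (fun _ : Fin 2 => (1 : ℤ)) (q ^ j * p ^ (i + 1 - 1 - j)) = 1 := by
      intro j _
      simp [q, p]
    rw [Finset.sum_congr rfl this]
    simp
  have := Finset.prod_pos hpos
  omega

lemma phi_symm (cs : List ℕ) (S : Multiset ℕ) (hs : List.Pairwise (· < ·) cs)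
    (hc : Multiset.card S = cs.length) : sw (Phi cs S) = Phi cs S := by
  have h1 := phi_mul cs S hs hc
  have h2 := congrArg sw h1
  rw [map_mul, sw_Mpoly, sw_Rprod, ← h1] at h2
  exact mul_right_cancel₀ (Mpoly_ne_zero S) h2

def FillSet : List ℕ → Multiset ℕ → Finset (List ℕ)
  | [], S => if S = 0 then {[]} else ∅
  | c :: cs, S => (S.filter (· < c)).toFinset.biUnion fun v => (FillSet cs (S.erase v)).image (v :: ·)

def neL : List ℕ → ℕ
  | [] => 0
  | v :: as => Multiset.card ((as : Multiset ℕ).filter (· < v)) + neL as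

def crL : List ℕ → List ℕ → ℕ
  | c :: cs, v :: as =>
      Multiset.card ((as : Multiset ℕ).filter (fun y => v < y ∧ y < c)) + crL cs as
  | _, _ => 0

lemma mem_FillSet : ∀ (cs : List ℕ) (S : Multiset ℕ) (as : List ℕ),
    as ∈ FillSet cs S ↔ List.Forall₂ (· < ·) as cs ∧ (as : Multiset ℕ) = S := by
  intro cs
  induction cs with
  | nil =>
    intro S as
    rw [FillSet]
    split_ifs with h
    · subst h
      simp only [Finset.mem_singleton]
      constructor
      · rintro rfl
        exact ⟨List.Forall₂.nil, rfl⟩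
      · rintro ⟨h1, h2⟩
        exact List.forall₂_nil_right_iff.mp h1
    · simp only [Finset.notMem_empty, false_iff]
      rintro ⟨h1, h2⟩
      have : as = [] := List.forall₂_nil_right_iff.mp h1
      subst this
      exact h (h2.symm.trans rfl)
  | cons c cs ih =>
    intro S as
    rw [FillSet, Finset.mem_biUnion]
    constructor
    · rintro ⟨v, hv, hmem⟩
      rw [Multiset.mem_toFinset, Multiset.mem_filter] at hv
      rw [Finset.mem_image] at hmem
      obtain ⟨as', has', rfl⟩ := hmem
      obtain ⟨h1, h2⟩ := (ih _ as').mp has'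
      refine ⟨List.Forall₂.cons hv.2 h1, ?_⟩
      have : ((v :: as' : List ℕ) : Multiset ℕ) = v ::ₘ (as' : Multiset ℕ) := rfl
      rw [this, h2, Multiset.cons_erase hv.1]
    · rintro ⟨h1, h2⟩
      rcases List.forall₂_cons_right_iff.mp h1 with ⟨v, as', hvc, h1', rfl⟩
      have hcoe : ((v :: as' : List ℕ) : Multiset ℕ) = v ::ₘ (as' : Multiset ℕ) := rfl
      rw [hcoe] at h2
      have hvS : v ∈ S := by rw [← h2]; exact Multiset.mem_cons_self _ _
      refine ⟨v, ?_, ?_⟩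
      · rw [Multiset.mem_toFinset, Multiset.mem_filter]
        exact ⟨hvS, hvc⟩
      · rw [Finset.mem_image]
        refine ⟨as', ?_, rfl⟩
        rw [ih]
        refine ⟨h1', ?_⟩
        rw [← h2, Multiset.erase_cons_head]

lemma filter_erase_self {S : Multiset ℕ} {v : ℕ} (hv : v ∈ S) (pr : ℕ → Prop)
    [DecidablePred pr] (hpr : ¬ pr v) :
    (S.erase v).filter pr = S.filter pr := by
  conv_rhs => rw [← Multiset.cons_erase hv]
  rw [Multiset.filter_cons_of_neg _ hpr]

lemma sum_FillSet : ∀ (cs : List ℕ) (S : Multiset ℕ),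
    ∑ as ∈ FillSet cs S, q ^ crL cs as * p ^ neL as = Phi cs S := by
  intro cs
  induction cs with
  | nil =>
    intro S
    rw [FillSet, Phi]
    split_ifs with h
    · simp [crL, neL]
    · simp
  | cons c cs ih =>
    intro S
    rw [FillSet, Phi]
    rw [Finset.sum_biUnion]
    · apply Finset.sum_congr rfl
      intro v hv
      rw [Multiset.mem_toFinset, Multiset.mem_filter] at hv
      obtain ⟨hvS, hvc⟩ := hv
      rw [Finset.sum_image (by intro x _ y _ h; exact (List.cons_injective h :))]
      have hterm : ∀ as' ∈ FillSet cs (S.erase v),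
          q ^ crL (c :: cs) (v :: as') * p ^ neL (v :: as')
            = q ^ alphaC S c v * p ^ betaC S v * (q ^ crL cs as' * p ^ neL as') := by
        intro as' has'
        obtain ⟨_, hmul⟩ := (mem_FillSet cs (S.erase v) as').mp has'
        rw [crL, neL, hmul]
        rw [filter_erase_self hvS (fun y => v < y ∧ y < c) (by omega)]
        rw [filter_erase_self hvS (fun y => y < v) (by omega)]
        rw [pow_add, pow_add, ← alphaC, ← betaC]
        ring
      rw [Finset.sum_congr rfl hterm, ← Finset.mul_sum, ih]
    · intro v₁ hv₁ v₂ hv₂ hne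
      apply Finset.disjoint_left.mpr
      intro as h1 h2
      simp only [Finset.mem_image] at h1 h2
      obtain ⟨a1, _, e1⟩ := h1
      obtain ⟨a2, _, e2⟩ := h2
      apply hne
      have := e1.trans e2.symm
      exact (List.cons_eq_cons.mp this).1

lemma filter_card_insert (e : ℕ × ℕ) (Z : Finset (ℕ × ℕ)) (he : e ∉ Z)
    (P : (ℕ × ℕ) × (ℕ × ℕ) → Prop) [DecidablePred P] (hPe : ¬ P (e, e)) :
    ((insert e Z ×ˢ insert e Z).filter P).card
      = ((Z.filter (fun z => P (e, z))).card + (Z.filter (fun z => P (z, e))).card)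
        + ((Z ×ˢ Z).filter P).card := by
  have hA : (insert e Z) ×ˢ (insert e Z)
      = {(e, e)} ∪ (({e} ×ˢ Z) ∪ ((Z ×ˢ {e}) ∪ Z ×ˢ Z)) := by
    ext x
    simp only [Finset.mem_product, Finset.mem_insert, Finset.mem_union,
      Finset.mem_singleton, Prod.ext_iff]
    tauto
  have d1 : Disjoint ({(e, e)} : Finset ((ℕ × ℕ) × (ℕ × ℕ)))
      (({e} ×ˢ Z) ∪ ((Z ×ˢ {e}) ∪ Z ×ˢ Z)) := by
    rw [Finset.disjoint_left]
    intro x hx hx'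
    rw [Finset.mem_singleton] at hx
    subst hx
    simp only [Finset.mem_union, Finset.mem_product, Finset.mem_singleton] at hx'
    tauto
  have d2 : Disjoint ({e} ×ˢ Z) ((Z ×ˢ {e}) ∪ Z ×ˢ Z) := by
    rw [Finset.disjoint_left]
    intro x hx hx'
    simp only [Finset.mem_union, Finset.mem_product, Finset.mem_singleton] at hx hx'
    obtain ⟨rfl, h2⟩ := hx
    tauto
  have d3 : Disjoint (Z ×ˢ ({e} : Finset (ℕ × ℕ))) (Z ×ˢ Z) := by
    rw [Finset.disjoint_left]
    intro x hx hx'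
    simp only [Finset.mem_product, Finset.mem_singleton] at hx hx'
    obtain ⟨h1, rfl⟩ := hx
    tauto
  rw [hA, Finset.filter_union, Finset.filter_union, Finset.filter_union,
    Finset.card_union_of_disjoint (d1.mono (Finset.filter_subset _ _)
      (Finset.union_subset_union (Finset.filter_subset _ _)
        (Finset.union_subset_union (Finset.filter_subset _ _) (Finset.filter_subset _ _)))),
    Finset.card_union_of_disjoint (d2.mono (Finset.filter_subset _ _)
      (Finset.union_subset_union (Finset.filter_subset _ _) (Finset.filter_subset _ _))),
    Finset.card_union_of_disjoint (d3.mono (Finset.filter_subset _ _) (Finset.filter_subset _ _))]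
  rw [Finset.filter_singleton, if_neg hPe, Finset.card_empty]
  rw [Finset.singleton_product, Finset.product_singleton,
    Finset.filter_map, Finset.filter_map, Finset.card_map, Finset.card_map]
  show _ + (#(filter (fun z => P (e, z)) Z) + (#(filter (fun z => P (z, e)) Z) + _)) = _
  omega

lemma zip_toFinset_val {as cs : List ℕ} (hnodup : (as.zip cs).Nodup) :
    (as.zip cs).toFinset.val = ((as.zip cs : List (ℕ × ℕ)) : Multiset (ℕ × ℕ)) := by
  simp [List.toFinset, Multiset.toFinset, Multiset.dedup_eq_self.mpr, hnodup]

lemma stats_zip : ∀ {as cs : List ℕ}, List.Forall₂ (· < ·) as cs →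
    List.Pairwise (· < ·) cs →
    cros2 ((as.zip cs).toFinset) = crL cs as ∧ nest2 ((as.zip cs).toFinset) = neL as := by
  intro as cs hf
  induction hf with
  | nil =>
    intro _
    constructor <;> simp [cros2, nest2, crL, neL]
  | @cons v c as cs hvc hf ih =>
    intro hsort
    rcases List.pairwise_cons.mp hsort with ⟨hcall, hsort'⟩
    obtain ⟨ihc, ihn⟩ := ih hsort'
    have hlen : as.length = cs.length := hf.length_eq
    have hsnd : ∀ z ∈ (as.zip cs).toFinset, c < z.2 := by
      intro z hz
      rw [List.mem_toFinset] at hz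
      exact hcall _ (List.of_mem_zip (a := z.1) (b := z.2) (by simpa using hz)).2
    have hnotmem : (v, c) ∉ (as.zip cs).toFinset := by
      intro hmem
      rw [List.mem_toFinset] at hmem
      have := (List.of_mem_zip hmem).2
      exact absurd (hcall _ this) (lt_irrefl c)
    have hzipcons : ((v :: as).zip (c :: cs)).toFinset
        = insert (v, c) (as.zip cs).toFinset := by
      rw [List.zip_cons_cons, List.toFinset_cons]
    have hnodup : (as.zip cs).Nodup := by
      have h2 : (List.map Prod.snd (as.zip cs)).Nodup := by
        rw [List.map_snd_zip (l₁ := as) (l₂ := cs) hlen.ge]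
        exact hsort'.nodup
      exact h2.of_map _
    have hcount : ∀ (pr : ℕ → Prop) (_ : DecidablePred pr),
        ((as.zip cs).toFinset.filter (fun z => pr z.1)).card
          = Multiset.card ((as : Multiset ℕ).filter pr) := by
      intro pr _
      have h1 : ((as.zip cs).toFinset.filter (fun z => pr z.1)).card
          = Multiset.countP (fun z : ℕ × ℕ => pr z.1)
              ((as.zip cs : List (ℕ × ℕ)) : Multiset (ℕ × ℕ)) := by
        rw [Finset.card_def, Finset.filter_val, zip_toFinset_val hnodup,
          Multiset.countP_eq_card_filter]
      have h2 : Multiset.countP pr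
            (Multiset.map Prod.fst ((as.zip cs : List (ℕ × ℕ)) : Multiset (ℕ × ℕ)))
          = Multiset.countP (fun z : ℕ × ℕ => pr z.1)
              ((as.zip cs : List (ℕ × ℕ)) : Multiset (ℕ × ℕ)) := by
        rw [Multiset.countP_map, Multiset.countP_eq_card_filter]
      have h3 : Multiset.map Prod.fst ((as.zip cs : List (ℕ × ℕ)) : Multiset (ℕ × ℕ))
          = ((as : List ℕ) : Multiset ℕ) := by
        rw [Multiset.map_coe, List.map_fst_zip (l₁ := as) (l₂ := cs) hlen.le]
      rw [h1, ← h2, h3, Multiset.countP_eq_card_filter]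
    constructor
    · simp only [cros2]
      rw [hzipcons, filter_card_insert (v, c) _ hnotmem
        (fun pp => pp.1.1 < pp.2.1 ∧ pp.2.1 < pp.1.2 ∧ pp.1.2 < pp.2.2)
        (by rintro ⟨h1, -, -⟩; exact lt_irrefl v h1)]
      show ((as.zip cs).toFinset.filter (fun z => v < z.1 ∧ z.1 < c ∧ c < z.2)).card
          + ((as.zip cs).toFinset.filter (fun z => z.1 < v ∧ v < z.2 ∧ z.2 < c)).card
          + cros2 ((as.zip cs).toFinset) = crL (c :: cs) (v :: as)
      have t1 : (as.zip cs).toFinset.filter (fun z => v < z.1 ∧ z.1 < c ∧ c < z.2)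
          = (as.zip cs).toFinset.filter (fun z => v < z.1 ∧ z.1 < c) := by
        apply Finset.filter_congr
        intro z hz
        have := hsnd z hz
        constructor
        · rintro ⟨h1, h2, -⟩; exact ⟨h1, h2⟩
        · rintro ⟨h1, h2⟩; exact ⟨h1, h2, this⟩
      have t2 : (as.zip cs).toFinset.filter (fun z => z.1 < v ∧ v < z.2 ∧ z.2 < c) = ∅ := by
        apply Finset.filter_false_of_mem
        intro z hz
        have := hsnd z hz
        rintro ⟨-, -, h3⟩
        omega
      have t3 : ((as.zip cs).toFinset.filter (fun z => v < z.1 ∧ z.1 < c)).card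
          = Multiset.card ((as : Multiset ℕ).filter (fun y => v < y ∧ y < c)) :=
        hcount (fun y => v < y ∧ y < c) inferInstance
      rw [t1, t2, t3, Finset.card_empty, ihc]
      simp only [crL]
      omega
    · simp only [nest2]
      rw [hzipcons, filter_card_insert (v, c) _ hnotmem
        (fun pp => pp.1.1 < pp.2.1 ∧ pp.2.1 < pp.2.2 ∧ pp.2.2 < pp.1.2)
        (by rintro ⟨h1, -, -⟩; exact lt_irrefl v h1)]
      show ((as.zip cs).toFinset.filter (fun z => v < z.1 ∧ z.1 < z.2 ∧ z.2 < c)).card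
          + ((as.zip cs).toFinset.filter (fun z => z.1 < v ∧ v < c ∧ c < z.2)).card
          + nest2 ((as.zip cs).toFinset) = neL (v :: as)
      have t1 : (as.zip cs).toFinset.filter (fun z => v < z.1 ∧ z.1 < z.2 ∧ z.2 < c) = ∅ := by
        apply Finset.filter_false_of_mem
        intro z hz
        have := hsnd z hz
        rintro ⟨-, -, h3⟩
        omega
      have t2 : (as.zip cs).toFinset.filter (fun z => z.1 < v ∧ v < c ∧ c < z.2)
          = (as.zip cs).toFinset.filter (fun z => z.1 < v) := by
        apply Finset.filter_congr
        intro z hz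
        have := hsnd z hz
        constructor
        · rintro ⟨h1, -, -⟩; exact h1
        · intro h1; exact ⟨h1, hvc, this⟩
      have t3 : ((as.zip cs).toFinset.filter (fun z => z.1 < v)).card
          = Multiset.card ((as : Multiset ℕ).filter (fun y => y < v)) :=
        hcount (fun y => y < v) inferInstance
      rw [t1, t2, t3, Finset.card_empty, ihn]
      simp only [neL]
      omega

def openerOf (G : Finset (ℕ × ℕ)) (c : ℕ) : ℕ :=
  (G.filter (fun e => e.2 = c)).sup (fun e => e.1)

lemma openerOf_eq {G : Finset (ℕ × ℕ)}
    (hinj : ∀ e ∈ G, ∀ f ∈ G, e.2 = f.2 → e = f) {e₀ : ℕ × ℕ} (he₀ : e₀ ∈ G) :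
    openerOf G e₀.2 = e₀.1 := by
  have hfil : G.filter (fun e => e.2 = e₀.2) = {e₀} := by
    ext f
    rw [Finset.mem_filter, Finset.mem_singleton]
    constructor
    · rintro ⟨hf, hsnd⟩
      exact hinj f hf e₀ he₀ hsnd
    · rintro rfl
      exact ⟨he₀, rfl⟩
  rw [openerOf, hfil, Finset.sup_singleton]

lemma mem_edgesOn {n : ℕ} {e : ℕ × ℕ} :
    e ∈ edgesOn n ↔ (1 ≤ e.1 ∧ e.1 ≤ n) ∧ (1 ≤ e.2 ∧ e.2 ≤ n) ∧ e.1 < e.2 := by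
  rw [edgesOn, Finset.mem_filter, Finset.mem_product, Finset.mem_Icc, Finset.mem_Icc]
  tauto

section Main

variable {n : ℕ} {S T : Multiset ℕ}

lemma asOf_mem_fill (hT : T.Nodup) {G : Finset (ℕ × ℕ)} (hGE : G ⊆ edgesOn n)
    (hGl : leftM G = S) (hGr : rightM G = T) :
    (T.sort (· ≤ ·)).map (openerOf G) ∈ FillSet (T.sort (· ≤ ·)) S := by
  set cs := T.sort (· ≤ ·) with hcs
  have hcoe : (cs : Multiset ℕ) = T := Multiset.sort_eq _ _
  have hinj : ∀ e ∈ G, ∀ f ∈ G, e.2 = f.2 → e = f := by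
    intro e he f hf hef
    refine Multiset.inj_on_of_nodup_map (f := Prod.snd) ?_ e he f hf hef
    rw [← rightM, hGr]; exact hT
  rw [mem_FillSet]
  constructor
  · rw [List.forall₂_iff_zip]
    constructor
    · simp
    · intro a b hab
      have hzm : (cs.map (openerOf G)).zip cs = cs.map (fun c => (openerOf G c, c)) := by
        have h := List.zip_map' (f := openerOf G) (g := id) (l := cs)
        simpa using h
      rw [hzm, List.mem_map] at hab
      obtain ⟨c, hc, hpair⟩ := hab
      have hcT : c ∈ T := by rw [← hcoe]; exact_mod_cast hc
      have : ∃ e ∈ G.val, e.2 = c := by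
        have : c ∈ G.val.map Prod.snd := by rw [← rightM, hGr]; exact hcT
        rw [Multiset.mem_map] at this
        exact this
      obtain ⟨e₀, he₀, hsnd⟩ := this
      have he₀G : e₀ ∈ G := he₀
      have hop : openerOf G c = e₀.1 := by rw [← hsnd]; exact openerOf_eq hinj he₀G
      have hlt := (mem_edgesOn.mp (hGE he₀G)).2.2
      rw [Prod.ext_iff] at hpair
      obtain ⟨h1, h2⟩ := hpair
      simp only at h1 h2
      subst h1 h2
      rw [hop, ← hsnd]
      exact hlt
  · have h1 : ((cs.map (openerOf G) : List ℕ) : Multiset ℕ)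
        = T.map (openerOf G) := by
      rw [← hcoe, Multiset.map_coe]
    rw [h1, ← hGr, rightM, Multiset.map_map, ← hGl, leftM]
    apply Multiset.map_congr rfl
    intro e he
    exact openerOf_eq hinj he

lemma zip_openerOf_eq (hT : T.Nodup) {G : Finset (ℕ × ℕ)}
    (hGr : rightM G = T) :
    (((T.sort (· ≤ ·)).map (openerOf G)).zip (T.sort (· ≤ ·))).toFinset = G := by
  set cs := T.sort (· ≤ ·) with hcs
  have hcoe : (cs : Multiset ℕ) = T := Multiset.sort_eq _ _
  have hcsnodup : cs.Nodup := by
    rw [← Multiset.coe_nodup, hcoe]; exact hT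
  have hinj : ∀ e ∈ G, ∀ f ∈ G, e.2 = f.2 → e = f := by
    intro e he f hf hef
    refine Multiset.inj_on_of_nodup_map (f := Prod.snd) ?_ e he f hf hef
    rw [← rightM, hGr]; exact hT
  have hzipmap : (cs.map (openerOf G)).zip cs = cs.map (fun c => (openerOf G c, c)) := by
    have h := List.zip_map' (f := openerOf G) (g := id) (l := cs)
    simpa using h
  have hsub : ((cs.map (openerOf G)).zip cs).toFinset ⊆ G := by
    intro x hx
    rw [List.mem_toFinset, hzipmap, List.mem_map] at hx
    obtain ⟨c, hc, hpair⟩ := hx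
    have hcT : c ∈ T := by rw [← hcoe]; exact_mod_cast hc
    have : ∃ e ∈ G.val, e.2 = c := by
      have : c ∈ G.val.map Prod.snd := by rw [← rightM, hGr]; exact hcT
      rw [Multiset.mem_map] at this
      exact this
    obtain ⟨e₀, he₀, hsnd⟩ := this
    have he₀G : e₀ ∈ G := he₀
    have hop : openerOf G c = e₀.1 := by rw [← hsnd]; exact openerOf_eq hinj he₀G
    have : x = e₀ := by
      rw [← hpair, hop, ← hsnd]
    rw [this]
    exact he₀G
  apply Finset.eq_of_subset_of_card_le hsub
  have hGcard : G.card = Multiset.card T := by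
    rw [← hGr, rightM, Multiset.card_map]
    rfl
  have hzlen : ((cs.map (openerOf G)).zip cs).length = cs.length := by
    rw [List.length_zip, List.length_map, min_self]
  have hzn : ((cs.map (openerOf G)).zip cs).Nodup := by
    have h2 : (List.map Prod.snd ((cs.map (openerOf G)).zip cs)).Nodup := by
      rw [List.map_snd_zip (l₁ := _) (l₂ := cs) (by rw [List.length_map])]
      exact hcsnodup
    exact h2.of_map _
  rw [List.toFinset_card_of_nodup hzn, hzlen, hGcard, ← hcoe, Multiset.coe_card]

lemma graph_sum (hT : T.Nodup) (h0 : (0 : ℕ) ∉ S) (hTn : ∀ c ∈ T, c ≤ n) :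
    ∑ G ∈ (edgesOn n).powerset.filter (fun G => leftM G = S ∧ rightM G = T),
        q ^ cros2 G * p ^ nest2 G
      = ∑ as ∈ FillSet (T.sort (· ≤ ·)) S, q ^ crL (T.sort (· ≤ ·)) as * p ^ neL as := by
  set cs := T.sort (· ≤ ·) with hcs
  have hcoe : (cs : Multiset ℕ) = T := Multiset.sort_eq _ _
  have hcsnodup : cs.Nodup := by
    rw [← Multiset.coe_nodup, hcoe]; exact hT
  have hsorted : cs.Pairwise (· < ·) :=
    ((Multiset.pairwise_sort _ _).and hcsnodup).imp fun h => lt_of_le_of_ne h.1 h.2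
  have hAfact : ∀ G ∈ (edgesOn n).powerset.filter
      (fun G => leftM G = S ∧ rightM G = T),
      G ⊆ edgesOn n ∧ leftM G = S ∧ rightM G = T := by
    intro G hG
    rw [Finset.mem_filter, Finset.mem_powerset] at hG
    exact ⟨hG.1, hG.2.1, hG.2.2⟩
  apply Finset.sum_nbij' (i := fun G => cs.map (openerOf G))
    (j := fun as => (as.zip cs).toFinset)
  · intro G hG
    obtain ⟨hGE, hGl, hGr⟩ := hAfact G hG
    exact asOf_mem_fill hT hGE hGl hGr
  · -- maps back into graph family
    intro as has
    obtain ⟨hfa, hmul⟩ := (mem_FillSet cs S as).mp has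
    have hlen : as.length = cs.length := hfa.length_eq
    have hzn : (as.zip cs).Nodup := by
      have h2 : (List.map Prod.snd (as.zip cs)).Nodup := by
        rw [List.map_snd_zip (l₁ := as) (l₂ := cs) hlen.ge]
        exact hcsnodup
      exact h2.of_map _
    have hzval : ((as.zip cs).toFinset).val = ((as.zip cs : List (ℕ × ℕ)) : Multiset (ℕ × ℕ)) :=
      zip_toFinset_val hzn
    have hleft : leftM ((as.zip cs).toFinset) = S := by
      rw [leftM, hzval, Multiset.map_coe, List.map_fst_zip (l₁ := as) (l₂ := cs) hlen.le, hmul]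
    have hright : rightM ((as.zip cs).toFinset) = T := by
      rw [rightM, hzval, Multiset.map_coe, List.map_snd_zip (l₁ := as) (l₂ := cs) hlen.ge, hcoe]
    rw [Finset.mem_filter, Finset.mem_powerset]
    refine ⟨?_, hleft, hright⟩
    intro e he
    rw [List.mem_toFinset] at he
    have hab : e.1 < e.2 := (List.forall₂_iff_zip.mp hfa).2 (by simpa using he)
    have he1S : e.1 ∈ S := by
      rw [← hmul]
      exact_mod_cast (List.of_mem_zip (a := e.1) (b := e.2) (by simpa using he)).1
    have he2T : e.2 ∈ T := by
      rw [← hcoe]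
      exact_mod_cast (List.of_mem_zip (a := e.1) (b := e.2) (by simpa using he)).2
    have h2n : e.2 ≤ n := hTn _ he2T
    have h1pos : 1 ≤ e.1 := by
      rcases Nat.eq_zero_or_pos e.1 with h | h
      · exact absurd (h ▸ he1S) h0
      · exact h
    rw [mem_edgesOn]
    exact ⟨⟨h1pos, by omega⟩, ⟨by omega, h2n⟩, hab⟩
  · intro G hG
    obtain ⟨hGE, hGl, hGr⟩ := hAfact G hG
    exact zip_openerOf_eq hT hGr
  · -- right inverse : asOf (toG as) = as
    intro as has
    obtain ⟨hfa, hmul⟩ := (mem_FillSet cs S as).mp has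
    have hlen : as.length = cs.length := hfa.length_eq
    have hzn : (as.zip cs).Nodup := by
      have h2 : (List.map Prod.snd (as.zip cs)).Nodup := by
        rw [List.map_snd_zip (l₁ := as) (l₂ := cs) hlen.ge]
        exact hcsnodup
      exact h2.of_map _
    have hzval : ((as.zip cs).toFinset).val = ((as.zip cs : List (ℕ × ℕ)) : Multiset (ℕ × ℕ)) :=
      zip_toFinset_val hzn
    have hinj : ∀ e ∈ (as.zip cs).toFinset, ∀ f ∈ (as.zip cs).toFinset, e.2 = f.2 → e = f := by
      intro e he f hf hef
      refine Multiset.inj_on_of_nodup_map (f := Prod.snd) (s := ((as.zip cs).toFinset).val) ?_ e he f hf hef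
      rw [hzval, Multiset.map_coe, List.map_snd_zip (l₁ := as) (l₂ := cs) hlen.ge]
      rw [Multiset.coe_nodup]
      exact hcsnodup
    apply List.ext_getElem
    · rw [List.length_map, ← hlen]
    · intro i h₁ h₂
      have hics : i < cs.length := by rw [List.length_map] at h₁; exact h₁
      have hiz : i < (as.zip cs).length := by rw [List.length_zip]; omega
      have hmem : (as[i], cs[i]) ∈ (as.zip cs).toFinset := by
        rw [List.mem_toFinset]
        have := List.getElem_zip (l := as) (l' := cs) (i := i) (h := hiz)
        rw [← this]
        exact List.getElem_mem hiz
      have : openerOf ((as.zip cs).toFinset) cs[i] = as[i] :=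
        openerOf_eq hinj (e₀ := (as[i], cs[i])) hmem
      rw [List.getElem_map]
      exact this
  · -- statistics agree
    intro G hG
    obtain ⟨hGE, hGl, hGr⟩ := hAfact G hG
    obtain ⟨hfa, -⟩ := (mem_FillSet cs S _).mp (asOf_mem_fill hT hGE hGl hGr)
    obtain ⟨hc, hn⟩ := stats_zip hfa hsorted
    rw [zip_openerOf_eq hT hGr] at hc hn
    rw [hc, hn]

lemma coeff_card (A : Finset (Finset (ℕ × ℕ))) (k l : ℕ) :
    (((A.filter fun G => cros2 G = k ∧ nest2 G = l).card : ℤ))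
      = MvPolynomial.coeff (Finsupp.single 0 k + Finsupp.single 1 l)
          (∑ G ∈ A, q ^ cros2 G * p ^ nest2 G) := by
  rw [MvPolynomial.coeff_sum]
  have hmono : ∀ a b : ℕ, (q : P2) ^ a * p ^ b
      = monomial (Finsupp.single 0 a + Finsupp.single 1 b) (1 : ℤ) := by
    intro a b
    rw [q, p, X_pow_eq_monomial, X_pow_eq_monomial, monomial_mul, one_mul]
  have hinj : ∀ a b : ℕ,
      (Finsupp.single (0 : Fin 2) a + Finsupp.single 1 b
        = Finsupp.single 0 k + Finsupp.single 1 l) ↔ (a = k ∧ b = l) := by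
    intro a b
    constructor
    · intro h
      have h0 := DFunLike.congr_fun h (0 : Fin 2)
      have h1 := DFunLike.congr_fun h (1 : Fin 2)
      simp [Finsupp.single_apply, Finsupp.add_apply] at h0 h1
      exact ⟨h0, h1⟩
    · rintro ⟨rfl, rfl⟩
      rfl
  have hterm : ∀ G ∈ A, MvPolynomial.coeff (Finsupp.single 0 k + Finsupp.single 1 l)
      ((q : P2) ^ cros2 G * p ^ nest2 G)
        = if cros2 G = k ∧ nest2 G = l then (1 : ℤ) else 0 := by
    intro G _
    rw [hmono, MvPolynomial.coeff_monomial]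
    exact if_congr (hinj _ _) rfl rfl
  rw [Finset.sum_congr rfl hterm, Finset.card_filter, Nat.cast_sum]
  apply Finset.sum_congr rfl
  intro G _
  rw [apply_ite (Nat.cast : ℕ → ℤ)]
  simp

end Main

end CN

/-- If every element of `T` has multiplicity one, then `(cros₂, nest₂)` is symmetrically
distributed over simple graphs `G` on `[n]` with `left(G) = S` and `right(G) = T`. -/
theorem cros_nest_symmetric_fixed_endpoints (n : ℕ) (S T : Multiset ℕ) (hT : T.Nodup)
    (k ℓ : ℕ) :
    ((edgesOn n).powerset.filter fun G =>
        leftM G = S ∧ rightM G = T ∧ cros2 G = k ∧ nest2 G = ℓ).card =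
    ((edgesOn n).powerset.filter fun G =>
        leftM G = S ∧ rightM G = T ∧ cros2 G = ℓ ∧ nest2 G = k).card := by
  classical
  by_cases hdeg : (0 : ℕ) ∈ S ∨ (∃ c ∈ T, n < c) ∨ Multiset.card S ≠ Multiset.card T
  · have hzero : ∀ k' l' : ℕ, ((edgesOn n).powerset.filter fun G =>
        leftM G = S ∧ rightM G = T ∧ cros2 G = k' ∧ nest2 G = l').card = 0 := by
      intro k' l'
      rw [Finset.card_eq_zero, Finset.filter_eq_empty_iff]
      rintro G hG ⟨hl, hr, -, -⟩
      rw [Finset.mem_powerset] at hG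
      rcases hdeg with h | h | h
      · rw [← hl, leftM, Multiset.mem_map] at h
        obtain ⟨e, he, h0⟩ := h
        have := (CN.mem_edgesOn.mp (hG he)).1.1
        omega
      · obtain ⟨c, hcT, hcn⟩ := h
        rw [← hr, rightM, Multiset.mem_map] at hcT
        obtain ⟨e, he, hce⟩ := hcT
        have := (CN.mem_edgesOn.mp (hG he)).2.1.2
        omega
      · apply h
        rw [← hl, ← hr, leftM, rightM, Multiset.card_map, Multiset.card_map]
    rw [hzero, hzero]
  · push_neg at hdeg
    obtain ⟨h0, hTn, hST⟩ := hdeg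
    set cs := T.sort (· ≤ ·) with hcs
    have hcoe : (cs : Multiset ℕ) = T := Multiset.sort_eq _ _
    have hcsnodup : cs.Nodup := by
      rw [← Multiset.coe_nodup, hcoe]; exact hT
    have hsorted : cs.Pairwise (· < ·) :=
      ((Multiset.pairwise_sort _ _).and hcsnodup).imp fun h => lt_of_le_of_ne h.1 h.2
    have hlen : Multiset.card S = cs.length := by
      rw [hST, ← hcoe, Multiset.coe_card]
    have hsplit : ∀ k' l' : ℕ, (edgesOn n).powerset.filter
        (fun G => leftM G = S ∧ rightM G = T ∧ cros2 G = k' ∧ nest2 G = l')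
          = ((edgesOn n).powerset.filter (fun G => leftM G = S ∧ rightM G = T)).filter
              (fun G => cros2 G = k' ∧ nest2 G = l') := by
      intro k' l'
      rw [Finset.filter_filter]
      apply Finset.filter_congr
      intro G _
      tauto
    have hsum : ∑ G ∈ (edgesOn n).powerset.filter (fun G => leftM G = S ∧ rightM G = T),
        CN.q ^ cros2 G * CN.p ^ nest2 G = CN.Phi cs S :=
      (CN.graph_sum hT h0 hTn).trans (CN.sum_FillSet cs S)
    have hsym : CN.sw (CN.Phi cs S) = CN.Phi cs S := CN.phi_symm cs S hsorted hlen
    have hcoeff : MvPolynomial.coeff (Finsupp.single 0 k + Finsupp.single 1 ℓ)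
        (CN.Phi cs S) = MvPolynomial.coeff (Finsupp.single 0 ℓ + Finsupp.single 1 k)
          (CN.Phi cs S) := by
      have hmd := MvPolynomial.coeff_rename_mapDomain (Equiv.swap (0 : Fin 2) 1)
        (Equiv.injective _) (CN.Phi cs S) (Finsupp.single 0 ℓ + Finsupp.single 1 k)
      rw [Finsupp.mapDomain_add, Finsupp.mapDomain_single, Finsupp.mapDomain_single] at hmd
      rw [Equiv.swap_apply_left, Equiv.swap_apply_right] at hmd
      have : CN.sw (CN.Phi cs S) = (MvPolynomial.rename (Equiv.swap (0 : Fin 2) 1))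
          (CN.Phi cs S) := rfl
      rw [this.symm, hsym, add_comm] at hmd
      exact hmd
    have h1 := CN.coeff_card ((edgesOn n).powerset.filter
      (fun G => leftM G = S ∧ rightM G = T)) k ℓ
    have h2 := CN.coeff_card ((edgesOn n).powerset.filter
      (fun G => leftM G = S ∧ rightM G = T)) ℓ k
    rw [hsum] at h1 h2
    rw [hsplit, hsplit]
    have : ((((edgesOn n).powerset.filter (fun G => leftM G = S ∧ rightM G = T)).filter
        (fun G => cros2 G = k ∧ nest2 G = ℓ)).card : ℤ)
        = ((((edgesOn n).powerset.filter (fun G => leftM G = S ∧ rightM G = T)).filter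
            (fun G => cros2 G = ℓ ∧ nest2 G = k)).card : ℤ) := by
      rw [h1, h2, hcoeff]
    exact_mod_cast this
end

section
/- The joint statistic (cros₂, nest₂) is symmetrically distributed over the set of set partitions of [n] via the standard representation: the number of partitions π of [n] whose standard representation graph has k 2-crossings and ℓ 2-nestings equals the number with ℓ 2-crossings and k 2-nestings. -/
/-- `π` is a set partition of `[n]`: nonempty pairwise-disjoint blocks with union `[n]`. -/
abbrev IsPartition (n : ℕ) (π : Finset (Finset ℕ)) : Prop :=
  (∀ B ∈ π, B.Nonempty) ∧ (∀ B ∈ π, B ⊆ Finset.Icc 1 n) ∧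
  (∀ B ∈ π, ∀ C ∈ π, B ≠ C → Disjoint B C) ∧
  (∀ x ∈ Finset.Icc 1 n, ∃ B ∈ π, x ∈ B)

/-- The standard representation of a partition: arcs join consecutive elements of each
block in increasing order. -/
def stdRep (n : ℕ) (π : Finset (Finset ℕ)) : Finset (ℕ × ℕ) :=
  (edgesOn n).filter fun e =>
    ∃ B ∈ π, e.1 ∈ B ∧ e.2 ∈ B ∧ ∀ c ∈ B, ¬(e.1 < c ∧ c < e.2)


namespace CNsym
open Finset

/-- rank of `x` in `V`: number of elements of `V` that are `≤ x`. -/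
def rkIn (V : Finset ℕ) (x : ℕ) : ℕ := (V.filter (· ≤ x)).card

/-- the `k`-th smallest element of `V` (1-indexed), junk value otherwise. -/
noncomputable def pick (V : Finset ℕ) (k : ℕ) : ℕ :=
  if h : k - 1 < V.card then ((V.orderIsoOfFin rfl) ⟨k-1, h⟩ : ℕ) else 0

lemma rank_orderIso (V : Finset ℕ) (m : Fin V.card) :
    rkIn V ((V.orderIsoOfFin rfl) m : ℕ) = m + 1 := by
  classical
  have himg : V.filter (· ≤ ((V.orderIsoOfFin rfl) m : ℕ)) =
      (Finset.Iic m).image (fun m' => ((V.orderIsoOfFin rfl) m' : ℕ)) := by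
    ext x
    simp only [mem_filter, mem_image, Finset.mem_Iic]
    constructor
    · rintro ⟨hxV, hxle⟩
      refine ⟨(V.orderIsoOfFin rfl).symm ⟨x, hxV⟩, ?_, by simp⟩
      have : ((V.orderIsoOfFin rfl) ((V.orderIsoOfFin rfl).symm ⟨x, hxV⟩) : ℕ) ≤
          ((V.orderIsoOfFin rfl) m : ℕ) := by simpa using hxle
      have h2 : ((V.orderIsoOfFin rfl).symm ⟨x, hxV⟩) ≤ m :=
        (V.orderIsoOfFin rfl).le_iff_le.mp (Subtype.coe_le_coe.mp this)
      exact h2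
    · rintro ⟨m', hm', rfl⟩
      refine ⟨Subtype.coe_prop _, ?_⟩
      exact Subtype.coe_le_coe.mpr ((V.orderIsoOfFin rfl).le_iff_le.mpr hm')
  rw [rkIn, himg, Finset.card_image_of_injective _ ?inj, Fin.card_Iic]
  case inj =>
    intro a b hab
    exact (V.orderIsoOfFin rfl).injective (Subtype.coe_injective hab)

lemma pick_mem {V : Finset ℕ} {k : ℕ} (h1 : 1 ≤ k) (h2 : k ≤ V.card) : pick V k ∈ V := by
  have h : k - 1 < V.card := by omega
  simp only [pick, dif_pos h]
  exact Subtype.coe_prop _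

lemma rkIn_pick {V : Finset ℕ} {k : ℕ} (h1 : 1 ≤ k) (h2 : k ≤ V.card) :
    rkIn V (pick V k) = k := by
  have h : k - 1 < V.card := by omega
  simp only [pick, dif_pos h]
  rw [rank_orderIso]
  simp only [Fin.val_mk]
  omega

lemma pick_rkIn {V : Finset ℕ} {x : ℕ} (hx : x ∈ V) : pick V (rkIn V x) = x := by
  obtain ⟨m, hm⟩ : ∃ m, ((V.orderIsoOfFin rfl) m : ℕ) = x :=
    ⟨(V.orderIsoOfFin rfl).symm ⟨x, hx⟩, by simp⟩
  have hr : rkIn V x = m + 1 := by rw [← hm, rank_orderIso]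
  have h : (m : ℕ) + 1 - 1 < V.card := by simp
  rw [hr, ← hm]
  simp only [pick, dif_pos h]
  congr 2


lemma rkIn_pos {V : Finset ℕ} {x : ℕ} (hx : x ∈ V) : 1 ≤ rkIn V x := by
  have : x ∈ V.filter (· ≤ x) := by simp [hx]
  exact Finset.card_pos.mpr ⟨x, this⟩

lemma rkIn_le_card {V : Finset ℕ} (x : ℕ) : rkIn V x ≤ V.card :=
  Finset.card_le_card (Finset.filter_subset _ _)

def IsMatching (n : ℕ) (M : Finset (ℕ × ℕ)) : Prop :=
  M ⊆ edgesOn n ∧ (∀ p ∈ M, ∀ q ∈ M, p.1 = q.1 → p = q) ∧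
    (∀ p ∈ M, ∀ q ∈ M, p.2 = q.2 → p = q)

def Op (M : Finset (ℕ × ℕ)) : Finset ℕ := M.image Prod.fst
def Cl (M : Finset (ℕ × ℕ)) : Finset ℕ := M.image Prod.snd
def SS (M : Finset (ℕ × ℕ)) (j : ℕ) : Finset ℕ :=
  (Op M).filter fun i => i < j ∧ ∀ p ∈ M, p.1 = i → j ≤ p.2
def ptn (M : Finset (ℕ × ℕ)) (j : ℕ) : ℕ := ∑ p ∈ M.filter (fun p => p.2 = j), p.1
def rk (M : Finset (ℕ × ℕ)) (j : ℕ) : ℕ := rkIn (SS M j) (ptn M j)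

lemma mem_edgesOn {n : ℕ} {e : ℕ × ℕ} :
    e ∈ edgesOn n ↔ (1 ≤ e.1 ∧ e.1 ≤ n) ∧ (1 ≤ e.2 ∧ e.2 ≤ n) ∧ e.1 < e.2 := by
  simp [edgesOn, and_assoc]

lemma edge_facts {n : ℕ} {M : Finset (ℕ × ℕ)} (hM : IsMatching n M) {i j : ℕ}
    (h : (i, j) ∈ M) : 1 ≤ i ∧ i < j ∧ j ≤ n := by
  have := mem_edgesOn.mp (hM.1 h)
  exact ⟨this.1.1, this.2.2, this.2.1.2⟩

lemma filter_snd_eq {n : ℕ} {M : Finset (ℕ × ℕ)} (hM : IsMatching n M) {i j : ℕ}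
    (h : (i, j) ∈ M) : M.filter (fun p => p.2 = j) = {(i, j)} := by
  ext q
  simp only [mem_filter, mem_singleton]
  constructor
  · rintro ⟨hq, hq2⟩
    exact hM.2.2 q hq (i, j) h hq2
  · rintro rfl; exact ⟨h, rfl⟩

lemma ptn_eq {n : ℕ} {M : Finset (ℕ × ℕ)} (hM : IsMatching n M) {i j : ℕ}
    (h : (i, j) ∈ M) : ptn M j = i := by
  rw [ptn, filter_snd_eq hM h, Finset.sum_singleton]

lemma ptn_mem_SS {n : ℕ} {M : Finset (ℕ × ℕ)} (hM : IsMatching n M) {i j : ℕ}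
    (h : (i, j) ∈ M) : i ∈ SS M j := by
  simp only [SS, mem_filter, Op, mem_image]
  refine ⟨⟨(i, j), h, rfl⟩, (edge_facts hM h).2.1, ?_⟩
  intro p hp hp1
  have : p = (i, j) := hM.2.1 p hp (i, j) h hp1
  rw [this]

lemma mem_Cl_iff {M : Finset (ℕ × ℕ)} {j : ℕ} : j ∈ Cl M ↔ ∃ i, (i, j) ∈ M := by
  simp only [Cl, mem_image]
  constructor
  · rintro ⟨p, hp, rfl⟩; exact ⟨p.1, by simpa using hp⟩
  · rintro ⟨i, hi⟩; exact ⟨(i, j), hi, rfl⟩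

lemma card_Op {n : ℕ} {M : Finset (ℕ × ℕ)} (hM : IsMatching n M) :
    (Op M).card = M.card :=
  Finset.card_image_of_injOn (fun p hp q hq h => hM.2.1 p hp q hq h)

lemma card_Cl {n : ℕ} {M : Finset (ℕ × ℕ)} (hM : IsMatching n M) :
    (Cl M).card = M.card :=
  Finset.card_image_of_injOn (fun p hp q hq h => hM.2.2 p hp q hq h)

lemma SS_eq {n : ℕ} {M : Finset (ℕ × ℕ)} (hM : IsMatching n M) (j : ℕ) :
    SS M j = (Op M).filter (· < j) \ (M.filter fun p => p.2 < j).image Prod.fst := by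
  ext i
  constructor
  · intro hi
    rw [SS, mem_filter] at hi
    obtain ⟨hOp, hlt, hall⟩ := hi
    rw [mem_sdiff]
    refine ⟨by rw [mem_filter]; exact ⟨hOp, hlt⟩, ?_⟩
    intro hc
    rw [mem_image] at hc
    obtain ⟨p, hp, rfl⟩ := hc
    rw [mem_filter] at hp
    have := hall p hp.1 rfl
    omega
  · intro hi
    rw [mem_sdiff, mem_filter] at hi
    obtain ⟨⟨hOp, hlt⟩, hno⟩ := hi
    rw [SS, mem_filter]
    refine ⟨hOp, hlt, ?_⟩
    intro p hp hp1
    by_contra hc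
    exact hno (mem_image.mpr ⟨p, mem_filter.mpr ⟨hp, by omega⟩, hp1⟩)

lemma card_SS {n : ℕ} {M : Finset (ℕ × ℕ)} (hM : IsMatching n M) (j : ℕ) :
    (SS M j).card + ((Cl M).filter (· < j)).card = ((Op M).filter (· < j)).card := by
  rw [SS_eq hM j]
  have hsub : (M.filter fun p => p.2 < j).image Prod.fst ⊆ (Op M).filter (· < j) := by
    intro i hi
    simp only [mem_image, mem_filter, Op] at hi ⊢
    obtain ⟨p, ⟨hp, hp2⟩, rfl⟩ := hi
    exact ⟨⟨p, hp, rfl⟩, by have := (edge_facts hM (show (p.1, p.2) ∈ M from hp)).2.1; omega⟩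
  rw [Finset.card_sdiff_of_subset hsub]
  have h1 : ((M.filter fun p => p.2 < j).image Prod.fst).card = (M.filter fun p => p.2 < j).card :=
    Finset.card_image_of_injOn (fun p hp q hq h =>
      hM.2.1 p (mem_filter.mp hp).1 q (mem_filter.mp hq).1 h)
  have h2 : ((Cl M).filter (· < j)) = (M.filter fun p => p.2 < j).image Prod.snd := by
    ext x
    simp only [mem_filter, mem_image, Cl]
    constructor
    · rintro ⟨⟨p, hp, rfl⟩, hlt⟩; exact ⟨p, ⟨hp, hlt⟩, rfl⟩
    · rintro ⟨p, ⟨hp, hlt⟩, rfl⟩; exact ⟨⟨p, hp, rfl⟩, hlt⟩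
  have h3 : ((M.filter fun p => p.2 < j).image Prod.snd).card = (M.filter fun p => p.2 < j).card :=
    Finset.card_image_of_injOn (fun p hp q hq h =>
      hM.2.2 p (mem_filter.mp hp).1 q (mem_filter.mp hq).1 h)
  have h4 := Finset.card_le_card hsub
  have h5 : ((Cl M).filter (· < j)).card = (M.filter fun p => p.2 < j).card := by
    rw [h2]; exact h3
  omega

lemma rk_bounds {n : ℕ} {M : Finset (ℕ × ℕ)} (hM : IsMatching n M) {j : ℕ}
    (hj : j ∈ Cl M) : 1 ≤ rk M j ∧ rk M j ≤ (SS M j).card := by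
  obtain ⟨i, hi⟩ := mem_Cl_iff.mp hj
  have hp := ptn_eq hM hi
  have hmem := ptn_mem_SS hM hi
  rw [rk, hp]
  exact ⟨rkIn_pos hmem, rkIn_le_card _⟩

section Stat
variable {n : ℕ} {M : Finset (ℕ × ℕ)}

lemma card_filter_product_fst {α β : Type*} [DecidableEq α] [DecidableEq β]
    (s : Finset α) (t : Finset β) (P : α × β → Prop) [DecidablePred P] :
    ((s ×ˢ t).filter P).card = ∑ a ∈ s, (t.filter (fun b => P (a, b))).card := by
  rw [Finset.card_eq_sum_card_fiberwise (f := Prod.fst) (t := s)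
    (fun x hx => (Finset.mem_product.mp (Finset.mem_filter.mp hx).1).1)]
  refine Finset.sum_congr rfl fun a ha => ?_
  have : (((s ×ˢ t).filter P).filter (fun x => x.1 = a)) =
      (t.filter fun b => P (a, b)).image (fun b => (a, b)) := by
    ext x
    simp only [Finset.mem_filter, Finset.mem_product, Finset.mem_image]
    constructor
    · rintro ⟨⟨⟨hxs, hxt⟩, hP⟩, rfl⟩
      exact ⟨x.2, ⟨hxt, hP⟩, rfl⟩
    · rintro ⟨b, ⟨hbt, hP⟩, rfl⟩
      exact ⟨⟨⟨ha, hbt⟩, hP⟩, rfl⟩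
  rw [this, Finset.card_image_of_injective _ (fun b c h => (Prod.mk.injEq _ _ _ _).mp h |>.2)]

lemma card_filter_product_snd {α β : Type*} [DecidableEq α] [DecidableEq β]
    (s : Finset α) (t : Finset β) (P : α × β → Prop) [DecidablePred P] :
    ((s ×ˢ t).filter P).card = ∑ b ∈ t, (s.filter (fun a => P (a, b))).card := by
  rw [Finset.card_eq_sum_card_fiberwise (f := Prod.snd) (t := t)
    (fun x hx => (Finset.mem_product.mp (Finset.mem_filter.mp hx).1).2)]
  refine Finset.sum_congr rfl fun b hb => ?_
  have : (((s ×ˢ t).filter P).filter (fun x => x.2 = b)) =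
      (s.filter fun a => P (a, b)).image (fun a => (a, b)) := by
    ext x
    simp only [Finset.mem_filter, Finset.mem_product, Finset.mem_image]
    constructor
    · rintro ⟨⟨⟨hxs, hxt⟩, hP⟩, rfl⟩
      exact ⟨x.1, ⟨hxs, hP⟩, rfl⟩
    · rintro ⟨a, ⟨has, hP⟩, rfl⟩
      exact ⟨⟨⟨has, hb⟩, hP⟩, rfl⟩
  rw [this, Finset.card_image_of_injective _ (fun b c h => (Prod.mk.injEq _ _ _ _).mp h |>.1)]

lemma cross_fiber (hM : IsMatching n M) {i j : ℕ} (hij : (i, j) ∈ M) :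
    (M.filter fun q => i < q.1 ∧ q.1 < j ∧ j < q.2).image Prod.fst
      = (SS M j).filter (fun x => i < x) := by
  ext i'
  simp only [Finset.mem_image, Finset.mem_filter]
  constructor
  · rintro ⟨q, ⟨hqM, h1, h2, h3⟩, rfl⟩
    refine ⟨?_, h1⟩
    rw [SS, Finset.mem_filter]
    refine ⟨Finset.mem_image.mpr ⟨q, hqM, rfl⟩, h2, ?_⟩
    intro p hp hp1
    have : p = q := hM.2.1 p hp q hqM hp1
    rw [this]; omega
  · rintro ⟨hSS, hlt⟩
    rw [SS, Finset.mem_filter] at hSS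
    obtain ⟨hOp, h1, h2⟩ := hSS
    obtain ⟨q, hq, rfl⟩ := Finset.mem_image.mp hOp
    have hj : j ≤ q.2 := h2 q hq rfl
    have hne : q.2 ≠ j := by
      intro he
      have : q = (i, j) := hM.2.2 q hq (i, j) hij he
      rw [this] at hlt
      simp at hlt
    exact ⟨q, ⟨hq, hlt, h1, by omega⟩, rfl⟩

lemma nest_fiber (hM : IsMatching n M) {i j : ℕ} (hij : (i, j) ∈ M) :
    (M.filter fun q => q.1 < i ∧ i < j ∧ j < q.2).image Prod.fst
      = (SS M j).filter (fun x => x < i) := by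
  ext i'
  simp only [Finset.mem_image, Finset.mem_filter]
  constructor
  · rintro ⟨q, ⟨hqM, h1, h2, h3⟩, rfl⟩
    refine ⟨?_, h1⟩
    rw [SS, Finset.mem_filter]
    refine ⟨Finset.mem_image.mpr ⟨q, hqM, rfl⟩, by omega, ?_⟩
    intro p hp hp1
    have : p = q := hM.2.1 p hp q hqM hp1
    rw [this]; omega
  · rintro ⟨hSS, hlt⟩
    rw [SS, Finset.mem_filter] at hSS
    obtain ⟨hOp, h1, h2⟩ := hSS
    obtain ⟨q, hq, rfl⟩ := Finset.mem_image.mp hOp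
    have hj : j ≤ q.2 := h2 q hq rfl
    have hne : q.2 ≠ j := by
      intro he
      have : q = (i, j) := hM.2.2 q hq (i, j) hij he
      rw [this] at hlt
      simp at hlt
    exact ⟨q, ⟨hq, hlt, (edge_facts hM hij).2.1, by omega⟩, rfl⟩

lemma card_filter_lt_of_mem {V : Finset ℕ} {x : ℕ} (hx : x ∈ V) :
    (V.filter (fun y => y < x)).card = rkIn V x - 1 := by
  have h : V.filter (· ≤ x) = insert x (V.filter (fun y => y < x)) := by
    ext y
    simp only [Finset.mem_filter, Finset.mem_insert]
    constructor
    · rintro ⟨hy, hle⟩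
      rcases Nat.lt_or_ge y x with h' | h'
      · exact Or.inr ⟨hy, h'⟩
      · exact Or.inl (by omega)
    · rintro (rfl | ⟨hy, hlt⟩)
      · exact ⟨hx, le_refl _⟩
      · exact ⟨hy, by omega⟩
  have hni : x ∉ V.filter (fun y => y < x) := by simp
  rw [rkIn, h, Finset.card_insert_of_notMem hni]
  omega

lemma card_filter_gt (V : Finset ℕ) (x : ℕ) :
    (V.filter (fun y => x < y)).card = V.card - rkIn V x := by
  have h : V.filter (fun y => x < y) = V \ V.filter (· ≤ x) := by
    ext y
    simp only [Finset.mem_filter, Finset.mem_sdiff]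
    constructor
    · rintro ⟨hy, hlt⟩
      exact ⟨hy, fun hc => absurd hc.2 (by omega)⟩
    · rintro ⟨hy, hn⟩
      refine ⟨hy, ?_⟩
      by_contra hc
      exact hn ⟨hy, by omega⟩
  rw [h, Finset.card_sdiff_of_subset (Finset.filter_subset _ _)]
  rfl

lemma sum_Cl (hM : IsMatching n M) (f : ℕ → ℕ) :
    ∑ j ∈ Cl M, f j = ∑ q ∈ M, f q.2 := by
  rw [Cl, Finset.sum_image]
  intro p hp q hq h
  exact hM.2.2 p hp q hq h

lemma cros2_eq (hM : IsMatching n M) :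
    cros2 M = ∑ j ∈ Cl M, ((SS M j).card - rk M j) := by
  rw [cros2, card_filter_product_fst, sum_Cl hM]
  refine Finset.sum_congr rfl fun q hq => ?_
  have hq' : (q.1, q.2) ∈ M := hq
  have h1 := cross_fiber hM hq'
  have h2 : ((M.filter fun r => q.1 < r.1 ∧ r.1 < q.2 ∧ q.2 < r.2).image Prod.fst).card
      = (M.filter fun r => q.1 < r.1 ∧ r.1 < q.2 ∧ q.2 < r.2).card :=
    Finset.card_image_of_injOn (fun a ha b hb h =>
      hM.2.1 a (Finset.mem_filter.mp ha).1 b (Finset.mem_filter.mp hb).1 h)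
  rw [← h2, h1, card_filter_gt, rk, ptn_eq hM hq']

lemma nest2_eq (hM : IsMatching n M) :
    nest2 M = ∑ j ∈ Cl M, (rk M j - 1) := by
  rw [nest2, card_filter_product_snd, sum_Cl hM]
  refine Finset.sum_congr rfl fun q hq => ?_
  have hq' : (q.1, q.2) ∈ M := hq
  have h1 := nest_fiber hM hq'
  have h2 : ((M.filter fun r => r.1 < q.1 ∧ q.1 < q.2 ∧ q.2 < r.2).image Prod.fst).card
      = (M.filter fun r => r.1 < q.1 ∧ q.1 < q.2 ∧ q.2 < r.2).card :=
    Finset.card_image_of_injOn (fun a ha b hb h =>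
      hM.2.1 a (Finset.mem_filter.mp ha).1 b (Finset.mem_filter.mp hb).1 h)
  rw [← h2, h1, card_filter_lt_of_mem (ptn_mem_SS hM hq'), rk, ptn_eq hM hq']

end Stat

section Build
variable (O C : Finset ℕ) (r : ℕ → ℕ)

noncomputable def buildF : ℕ → Finset (ℕ × ℕ)
  | 0 => ∅
  | j+1 =>
      if (j+1) ∈ C then
        insert (pick ((O.filter (· ≤ j)) \ ((buildF j).image Prod.fst)) (r (j+1)), j+1)
          (buildF j)
      else buildF j

variable {O C r}

lemma filter_le_succ_of_notMem {j : ℕ} (h : (j+1) ∉ C) :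
    C.filter (· ≤ j+1) = C.filter (· ≤ j) := by
  ext c
  simp only [Finset.mem_filter]
  constructor
  · rintro ⟨hc, hle⟩
    refine ⟨hc, ?_⟩
    rcases Nat.lt_or_ge c (j+1) with h' | h'
    · omega
    · have : c = j + 1 := by omega
      rw [this] at hc; exact absurd hc h
  · rintro ⟨hc, hle⟩; exact ⟨hc, by omega⟩

lemma filter_le_succ_of_mem {j : ℕ} (h : (j+1) ∈ C) :
    C.filter (· ≤ j+1) = insert (j+1) (C.filter (· ≤ j)) := by
  ext c
  simp only [Finset.mem_filter, Finset.mem_insert]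
  constructor
  · rintro ⟨hc, hle⟩
    rcases Nat.lt_or_ge c (j+1) with h' | h'
    · exact Or.inr ⟨hc, by omega⟩
    · exact Or.inl (by omega)
  · rintro (rfl | ⟨hc, hle⟩)
    · exact ⟨h, le_refl _⟩
    · exact ⟨hc, by omega⟩

lemma build_inv {n : ℕ} (hC : C ⊆ Finset.Icc 1 n)
    (hr : ∀ j ∈ C, 1 ≤ r j ∧ r j + (C.filter (· < j)).card ≤ (O.filter (· < j)).card)
    (j : ℕ) :
    (∀ p ∈ buildF O C r j, p.1 ∈ O ∧ p.1 < p.2 ∧ p.2 ∈ C ∧ p.2 ≤ j)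
    ∧ ((buildF O C r j).image Prod.snd = C.filter (· ≤ j))
    ∧ (∀ p ∈ buildF O C r j, ∀ q ∈ buildF O C r j, p.1 = q.1 → p = q)
    ∧ (∀ p ∈ buildF O C r j, ∀ q ∈ buildF O C r j, p.2 = q.2 → p = q)
    ∧ ((buildF O C r j).image Prod.fst).card = (C.filter (· ≤ j)).card := by
  induction j with
  | zero =>
    have h0 : C.filter (· ≤ 0) = ∅ := by
      ext c
      simp only [Finset.mem_filter, Finset.notMem_empty, iff_false, not_and]
      intro hc hle
      have := hC hc
      rw [Finset.mem_Icc] at this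
      omega
    rw [show buildF O C r 0 = ∅ from rfl, h0]
    simp
  | succ j ih =>
    obtain ⟨ih1, ih2, ih3, ih4, ih5⟩ := ih
    by_cases hj : (j+1) ∈ C
    · have hsub : (buildF O C r j).image Prod.fst ⊆ O.filter (· ≤ j) := by
        intro x hx
        obtain ⟨p, hp, rfl⟩ := Finset.mem_image.mp hx
        obtain ⟨h1, h2, h3, h4⟩ := ih1 p hp
        exact Finset.mem_filter.mpr ⟨h1, by omega⟩
      have hcardV : ((O.filter (· ≤ j)) \ ((buildF O C r j).image Prod.fst)).card
          = (O.filter (· ≤ j)).card - (C.filter (· ≤ j)).card := by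
        rw [Finset.card_sdiff_of_subset hsub, ih5]
      have hflt : ∀ (s : Finset ℕ), s.filter (· < j+1) = s.filter (· ≤ j) := by
        intro s
        apply Finset.filter_congr
        intro x _
        omega
      have hrj := hr (j+1) hj
      rw [hflt, hflt] at hrj
      have hle := Finset.card_le_card hsub
      have hr1 : 1 ≤ r (j+1) := hrj.1
      have hr2 : r (j+1) ≤ ((O.filter (· ≤ j)) \ ((buildF O C r j).image Prod.fst)).card := by
        omega
      have hpk := pick_mem hr1 hr2
      rw [Finset.mem_sdiff, Finset.mem_filter] at hpk
      obtain ⟨⟨hpO, hple⟩, hpnot⟩ := hpk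
      have hbuild : buildF O C r (j+1) =
          insert (pick ((O.filter (· ≤ j)) \ ((buildF O C r j).image Prod.fst)) (r (j+1)), j+1)
            (buildF O C r j) := by
        rw [buildF, if_pos hj]
      set z := pick ((O.filter (· ≤ j)) \ ((buildF O C r j).image Prod.fst)) (r (j+1)) with hz
      rw [hbuild]
      refine ⟨?_, ?_, ?_, ?_, ?_⟩
      · intro p hp
        rcases Finset.mem_insert.mp hp with rfl | hp'
        · exact ⟨hpO, by simp; omega, hj, le_refl _⟩
        · obtain ⟨h1, h2, h3, h4⟩ := ih1 p hp'
          exact ⟨h1, h2, h3, by omega⟩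
      · rw [Finset.image_insert, ih2, filter_le_succ_of_mem hj]
      · intro p hp q hq hpq
        rcases Finset.mem_insert.mp hp with rfl | hp' <;>
          rcases Finset.mem_insert.mp hq with rfl | hq'
        · rfl
        · exact absurd (Finset.mem_image.mpr ⟨q, hq', hpq.symm⟩) hpnot
        · exact absurd (Finset.mem_image.mpr ⟨p, hp', hpq⟩) hpnot
        · exact ih3 p hp' q hq' hpq
      · intro p hp q hq hpq
        rcases Finset.mem_insert.mp hp with rfl | hp' <;>
          rcases Finset.mem_insert.mp hq with rfl | hq'
        · rfl
        · have h2 : j + 1 = q.2 := hpq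
          have := (ih1 q hq').2.2.2
          omega
        · have h2 : p.2 = j + 1 := hpq
          have := (ih1 p hp').2.2.2
          omega
        · exact ih4 p hp' q hq' hpq
      · rw [Finset.image_insert, Finset.card_insert_of_notMem hpnot, ih5,
          filter_le_succ_of_mem hj, Finset.card_insert_of_notMem (by simp)]
    · have hbuild : buildF O C r (j+1) = buildF O C r j := by
        rw [buildF, if_neg hj]
      rw [hbuild, filter_le_succ_of_notMem hj]
      refine ⟨?_, ih2, ih3, ih4, ih5⟩
      intro p hp
      obtain ⟨h1, h2, h3, h4⟩ := ih1 p hp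
      exact ⟨h1, h2, h3, by omega⟩

end Build
section BuildCor
variable {O C : Finset ℕ} {r : ℕ → ℕ} {n : ℕ}

lemma buildF_prefix (j m : ℕ) (hjm : j ≤ m) (hC : C ⊆ Finset.Icc 1 n)
    (hr : ∀ j ∈ C, 1 ≤ r j ∧ r j + (C.filter (· < j)).card ≤ (O.filter (· < j)).card) :
    buildF O C r j = (buildF O C r m).filter (fun p => p.2 ≤ j) := by
  induction m with
  | zero =>
    have : j = 0 := by omega
    subst this
    rfl
  | succ m ih =>
    rcases Nat.lt_or_ge j (m+1) with h' | h'
    · have hj : j ≤ m := by omega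
      rw [ih hj]
      by_cases hm : (m+1) ∈ C
      · have hbuild : buildF O C r (m+1) =
            insert (pick ((O.filter (· ≤ m)) \ ((buildF O C r m).image Prod.fst)) (r (m+1)), m+1)
              (buildF O C r m) := by
          rw [buildF, if_pos hm]
        rw [hbuild, Finset.filter_insert, if_neg (by simp; omega)]
      · have hbuild : buildF O C r (m+1) = buildF O C r m := by
          rw [buildF, if_neg hm]
        rw [hbuild]
    · have : j = m + 1 := by omega
      subst this
      have h1 := (build_inv hC hr (m+1)).1
      symm
      rw [Finset.filter_eq_self]
      intro p hp
      exact (h1 p hp).2.2.2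

lemma buildF_isMatching (hO : O ⊆ Finset.Icc 1 n) (hC : C ⊆ Finset.Icc 1 n)
    (hr : ∀ j ∈ C, 1 ≤ r j ∧ r j + (C.filter (· < j)).card ≤ (O.filter (· < j)).card) :
    IsMatching n (buildF O C r n) := by
  obtain ⟨h1, h2, h3, h4, h5⟩ := build_inv hC hr n
  refine ⟨?_, h3, h4⟩
  intro p hp
  obtain ⟨hp1, hp2, hp3, hp4⟩ := h1 p hp
  rw [mem_edgesOn]
  have hO' := Finset.mem_Icc.mp (hO hp1)
  have hC' := Finset.mem_Icc.mp (hC hp3)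
  exact ⟨⟨hO'.1, hO'.2⟩, ⟨hC'.1, hC'.2⟩, hp2⟩

lemma buildF_Cl (hC : C ⊆ Finset.Icc 1 n)
    (hr : ∀ j ∈ C, 1 ≤ r j ∧ r j + (C.filter (· < j)).card ≤ (O.filter (· < j)).card) :
    Cl (buildF O C r n) = C := by
  rw [Cl, (build_inv hC hr n).2.1, Finset.filter_eq_self]
  intro c hc
  exact (Finset.mem_Icc.mp (hC hc)).2

lemma buildF_Op (hO : O ⊆ Finset.Icc 1 n) (hC : C ⊆ Finset.Icc 1 n) (hOC : O.card = C.card)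
    (hr : ∀ j ∈ C, 1 ≤ r j ∧ r j + (C.filter (· < j)).card ≤ (O.filter (· < j)).card) :
    Op (buildF O C r n) = O := by
  obtain ⟨h1, h2, h3, h4, h5⟩ := build_inv hC hr n
  have hsub : Op (buildF O C r n) ⊆ O := by
    intro x hx
    obtain ⟨p, hp, rfl⟩ := Finset.mem_image.mp hx
    exact (h1 p hp).1
  have hfull : C.filter (· ≤ n) = C := Finset.filter_eq_self.mpr
    (fun c hc => (Finset.mem_Icc.mp (hC hc)).2)
  apply Finset.eq_of_subset_of_card_le hsub
  rw [show Op (buildF O C r n) = (buildF O C r n).image Prod.fst from rfl, h5, hfull]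
  exact le_of_eq hOC

lemma buildF_SS (hO : O ⊆ Finset.Icc 1 n) (hC : C ⊆ Finset.Icc 1 n) (hOC : O.card = C.card)
    (hr : ∀ j ∈ C, 1 ≤ r j ∧ r j + (C.filter (· < j)).card ≤ (O.filter (· < j)).card)
    {j : ℕ} (hj : j ∈ C) :
    SS (buildF O C r n) j =
      (O.filter (· ≤ j - 1)) \ ((buildF O C r (j - 1)).image Prod.fst) := by
  have hM := buildF_isMatching hO hC hr
  have hj1 : 1 ≤ j ∧ j ≤ n := Finset.mem_Icc.mp (hC hj)
  rw [SS_eq hM j, buildF_Op hO hC hOC hr]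
  have h1 : (buildF O C r n).filter (fun p => p.2 < j) = buildF O C r (j-1) := by
    rw [buildF_prefix (j-1) n (by omega) hC hr]
    apply Finset.filter_congr
    intro p _
    omega
  have h2 : O.filter (· < j) = O.filter (· ≤ j - 1) := by
    apply Finset.filter_congr
    intro x _
    omega
  rw [h1, h2]

lemma buildF_arc (hC : C ⊆ Finset.Icc 1 n)
    (hr : ∀ j ∈ C, 1 ≤ r j ∧ r j + (C.filter (· < j)).card ≤ (O.filter (· < j)).card)
    {j : ℕ} (hj : j ∈ C) :
    (pick ((O.filter (· ≤ j - 1)) \ ((buildF O C r (j - 1)).image Prod.fst)) (r j), j)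
      ∈ buildF O C r n := by
  have hj1 : 1 ≤ j ∧ j ≤ n := Finset.mem_Icc.mp (hC hj)
  have hstep : (pick ((O.filter (· ≤ j - 1)) \ ((buildF O C r (j - 1)).image Prod.fst)) (r j), j)
      ∈ buildF O C r j := by
    have hd : j = (j - 1) + 1 := by omega
    rw [hd]
    rw [buildF, if_pos (hd ▸ hj)]
    rw [← hd]
    exact Finset.mem_insert_self _ _
  have := buildF_prefix j n hj1.2 hC hr
  rw [this] at hstep
  exact (Finset.mem_filter.mp hstep).1

lemma buildF_card_SS (hO : O ⊆ Finset.Icc 1 n) (hC : C ⊆ Finset.Icc 1 n) (hOC : O.card = C.card)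
    (hr : ∀ j ∈ C, 1 ≤ r j ∧ r j + (C.filter (· < j)).card ≤ (O.filter (· < j)).card)
    {j : ℕ} (hj : j ∈ C) :
    (SS (buildF O C r n) j).card = (O.filter (· < j)).card - (C.filter (· < j)).card := by
  have hM := buildF_isMatching hO hC hr
  have := card_SS hM j
  rw [buildF_Op hO hC hOC hr, buildF_Cl hC hr] at this
  omega

lemma buildF_rk (hO : O ⊆ Finset.Icc 1 n) (hC : C ⊆ Finset.Icc 1 n) (hOC : O.card = C.card)
    (hr : ∀ j ∈ C, 1 ≤ r j ∧ r j + (C.filter (· < j)).card ≤ (O.filter (· < j)).card)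
    {j : ℕ} (hj : j ∈ C) :
    rk (buildF O C r n) j = r j := by
  have hM := buildF_isMatching hO hC hr
  have harc := buildF_arc hC hr hj (O := O) (r := r)
  have hp := ptn_eq hM harc
  rw [rk, hp, buildF_SS hO hC hOC hr hj]
  have hj1 : 1 ≤ j ∧ j ≤ n := Finset.mem_Icc.mp (hC hj)
  -- card of the vacancy set
  have hVcard : ((O.filter (· ≤ j - 1)) \ ((buildF O C r (j - 1)).image Prod.fst)).card
      = (O.filter (· < j)).card - (C.filter (· < j)).card := by
    have := buildF_SS hO hC hOC hr hj (r := r)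
    rw [← this]
    exact buildF_card_SS hO hC hOC hr hj
  have hrj := hr j hj
  have hle : (C.filter (· < j)).card ≤ (O.filter (· < j)).card := by omega
  exact rkIn_pick hrj.1 (by omega)

lemma buildF_congr (r' : ℕ → ℕ) (h : ∀ j ∈ C, r j = r' j) (j : ℕ) :
    buildF O C r j = buildF O C r' j := by
  induction j with
  | zero => rfl
  | succ j ih =>
    by_cases hj : (j+1) ∈ C
    · rw [buildF, buildF, if_pos hj, if_pos hj, ih, h (j+1) hj]
    · rw [buildF, buildF, if_neg hj, if_neg hj, ih]

lemma buildF_recover {M : Finset (ℕ × ℕ)} (hM : IsMatching n M) (j : ℕ) :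
    buildF (Op M) (Cl M) (rk M) j = M.filter (fun p => p.2 ≤ j) := by
  induction j with
  | zero =>
    symm
    rw [show buildF (Op M) (Cl M) (rk M) 0 = ∅ from rfl, Finset.filter_eq_empty_iff]
    intro p hp
    have := (edge_facts hM (show (p.1, p.2) ∈ M from hp)).2.1
    have := (edge_facts hM (show (p.1, p.2) ∈ M from hp)).1
    omega
  | succ j ih =>
    by_cases hj : (j+1) ∈ Cl M
    · obtain ⟨i, hi⟩ := mem_Cl_iff.mp hj
      have hVeq : (Op M).filter (· ≤ j) \ ((buildF (Op M) (Cl M) (rk M) j).image Prod.fst)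
          = SS M (j+1) := by
        rw [ih, SS_eq hM (j+1)]
        congr 1
        · apply Finset.filter_congr
          intro x _
          omega
        · congr 1
          apply Finset.filter_congr
          intro p _
          omega
      have hpickval : pick (SS M (j+1)) (rk M (j+1)) = i := by
        rw [rk, ptn_eq hM hi]
        exact pick_rkIn (ptn_mem_SS hM hi)
      rw [buildF, if_pos hj, hVeq, hpickval, ih]
      ext q
      simp only [Finset.mem_insert, Finset.mem_filter]
      constructor
      · rintro (rfl | ⟨hq, hle⟩)
        · exact ⟨hi, le_refl _⟩
        · exact ⟨hq, by omega⟩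
      · rintro ⟨hq, hle⟩
        rcases Nat.lt_or_ge q.2 (j+1) with h' | h'
        · exact Or.inr ⟨hq, by omega⟩
        · have hq2 : q.2 = j + 1 := by omega
          left
          have : q = (i, j+1) := hM.2.2 q hq (i, j+1) hi hq2
          exact this
    · rw [buildF, if_neg hj, ih]
      apply Finset.filter_congr
      intro p hp
      have : p.2 ≠ j + 1 := by
        intro hc
        exact hj (mem_Cl_iff.mpr ⟨p.1, by rw [← hc]; exact hp⟩)
      constructor <;> intro <;> omega

lemma buildF_recover_top {M : Finset (ℕ × ℕ)} (hM : IsMatching n M) :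
    buildF (Op M) (Cl M) (rk M) n = M := by
  rw [buildF_recover hM n, Finset.filter_eq_self]
  intro p hp
  exact (mem_edgesOn.mp (hM.1 hp)).2.1.2

end BuildCor

section Phi
variable {n : ℕ} {M : Finset (ℕ × ℕ)}

noncomputable def Phi (n : ℕ) (M : Finset (ℕ × ℕ)) : Finset (ℕ × ℕ) :=
  buildF (Op M) (Cl M) (fun j => (SS M j).card + 1 - rk M j) n

lemma Op_subset (hM : IsMatching n M) : Op M ⊆ Finset.Icc 1 n := by
  intro x hx
  obtain ⟨p, hp, rfl⟩ := Finset.mem_image.mp hx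
  have := edge_facts hM (show (p.1, p.2) ∈ M from hp)
  rw [Finset.mem_Icc]
  omega

lemma Cl_subset (hM : IsMatching n M) : Cl M ⊆ Finset.Icc 1 n := by
  intro x hx
  obtain ⟨p, hp, rfl⟩ := Finset.mem_image.mp hx
  have := edge_facts hM (show (p.1, p.2) ∈ M from hp)
  rw [Finset.mem_Icc]
  omega

lemma phi_hr (hM : IsMatching n M) :
    ∀ j ∈ Cl M, 1 ≤ (SS M j).card + 1 - rk M j ∧
      ((SS M j).card + 1 - rk M j) + ((Cl M).filter (· < j)).card
        ≤ ((Op M).filter (· < j)).card := by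
  intro j hj
  have hb := rk_bounds hM hj
  have hc := card_SS hM j
  omega

lemma phi_isMatching (hM : IsMatching n M) : IsMatching n (Phi n M) :=
  buildF_isMatching (Op_subset hM) (Cl_subset hM) (phi_hr hM)

lemma Op_phi (hM : IsMatching n M) : Op (Phi n M) = Op M :=
  buildF_Op (Op_subset hM) (Cl_subset hM) (by rw [card_Op hM, card_Cl hM]) (phi_hr hM)

lemma Cl_phi (hM : IsMatching n M) : Cl (Phi n M) = Cl M :=
  buildF_Cl (Cl_subset hM) (phi_hr hM)

lemma card_SS_phi (hM : IsMatching n M) {j : ℕ} (hj : j ∈ Cl M) :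
    (SS (Phi n M) j).card = (SS M j).card := by
  have h1 := buildF_card_SS (Op_subset hM) (Cl_subset hM)
    (by rw [card_Op hM, card_Cl hM]) (phi_hr hM) hj
  have h2 := card_SS hM j
  rw [Phi, h1]
  omega

lemma rk_phi (hM : IsMatching n M) {j : ℕ} (hj : j ∈ Cl M) :
    rk (Phi n M) j = (SS M j).card + 1 - rk M j :=
  buildF_rk (Op_subset hM) (Cl_subset hM) (by rw [card_Op hM, card_Cl hM]) (phi_hr hM) hj

lemma phi_phi (hM : IsMatching n M) : Phi n (Phi n M) = M := by
  have hM' := phi_isMatching hM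
  rw [show Phi n (Phi n M) = buildF (Op (Phi n M)) (Cl (Phi n M))
      (fun j => (SS (Phi n M) j).card + 1 - rk (Phi n M) j) n from rfl,
    Op_phi hM, Cl_phi hM]
  rw [buildF_congr (rk M) ?hcong n]
  · exact buildF_recover_top hM
  case hcong =>
    intro j hj
    have h1 := card_SS_phi hM hj
    have h2 := rk_phi hM hj
    have hb := rk_bounds hM hj
    omega

lemma cros2_phi (hM : IsMatching n M) : cros2 (Phi n M) = nest2 M := by
  rw [cros2_eq (phi_isMatching hM), nest2_eq hM, Cl_phi hM]
  refine Finset.sum_congr rfl fun j hj => ?_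
  have h1 := card_SS_phi hM hj
  have h2 := rk_phi hM hj
  have hb := rk_bounds hM hj
  omega

lemma nest2_phi (hM : IsMatching n M) : nest2 (Phi n M) = cros2 M := by
  rw [nest2_eq (phi_isMatching hM), cros2_eq hM, Cl_phi hM]
  refine Finset.sum_congr rfl fun j hj => ?_
  have h1 := card_SS_phi hM hj
  have h2 := rk_phi hM hj
  have hb := rk_bounds hM hj
  omega

end Phi

section Part
attribute [local instance] Classical.propDecidable
variable {n : ℕ} {M : Finset (ℕ × ℕ)} {π : Finset (Finset ℕ)}

def reach (M : Finset (ℕ × ℕ)) : ℕ → ℕ → Prop :=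
  Relation.ReflTransGen (fun a b => (a, b) ∈ M)

def connM (M : Finset (ℕ × ℕ)) (x y : ℕ) : Prop := ∃ z, reach M z x ∧ reach M z y

noncomputable def blockOf (n : ℕ) (M : Finset (ℕ × ℕ)) (x : ℕ) : Finset ℕ :=
  (Finset.Icc 1 n).filter (fun y => connM M x y)

noncomputable def toPart (n : ℕ) (M : Finset (ℕ × ℕ)) : Finset (Finset ℕ) :=
  (Finset.Icc 1 n).image (fun x => blockOf n M x)

lemma connM_refl (x : ℕ) : connM M x x := ⟨x, .refl, .refl⟩

lemma connM_symm {x y : ℕ} (h : connM M x y) : connM M y x := by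
  obtain ⟨z, h1, h2⟩ := h
  exact ⟨z, h2, h1⟩

lemma reach_le (hM : IsMatching n M) {x y : ℕ} (h : reach M x y) : x ≤ y := by
  induction h with
  | refl => exact le_refl x
  | tail h1 harc ih =>
    have := (edge_facts hM harc).2.1
    omega

lemma reach_comp_fwd (hM : IsMatching n M) {z x y : ℕ} (hzx : reach M z x) :
    reach M z y → reach M x y ∨ reach M y x := by
  induction hzx using Relation.ReflTransGen.head_induction_on with
  | refl => intro h; exact Or.inl h
  | head harc hrest ih =>
    intro hzy
    rcases Relation.ReflTransGen.cases_head hzy with rfl | ⟨w', hw', hrest'⟩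
    · exact Or.inr (Relation.ReflTransGen.head harc hrest)
    · have hbc : w' = _ := congrArg Prod.snd (hM.2.1 _ hw' _ harc rfl)
      rw [hbc] at hrest'
      exact ih hrest'

lemma reach_comp_bwd (hM : IsMatching n M) {x y z : ℕ} (hyx : reach M y x) :
    reach M z x → reach M y z ∨ reach M z y := by
  induction hyx with
  | refl => intro hz; exact Or.inr hz
  | tail hyb harc ih =>
    intro hzc
    rcases Relation.ReflTransGen.cases_tail hzc with rfl | ⟨d, hzd, hdc⟩
    · exact Or.inl (hyb.tail harc)
    · have hdb : d = _ := congrArg Prod.fst (hM.2.2 _ hdc _ harc rfl)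
      rw [hdb] at hzd
      exact ih hzd

lemma connM_trans (hM : IsMatching n M) {x y z : ℕ}
    (h1 : connM M x y) (h2 : connM M y z) : connM M x z := by
  obtain ⟨a, hax, hay⟩ := h1
  obtain ⟨b, hby, hbz⟩ := h2
  rcases reach_comp_bwd hM hay hby with h | h
  · exact ⟨a, hax, h.trans hbz⟩
  · exact ⟨b, h.trans hax, hbz⟩

lemma mem_blockOf_iff {x y : ℕ} :
    y ∈ blockOf n M x ↔ y ∈ Finset.Icc 1 n ∧ connM M x y := by
  rw [blockOf, Finset.mem_filter]

lemma toPart_isPartition (hM : IsMatching n M) : IsPartition n (toPart n M) := by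
  refine ⟨?_, ?_, ?_, ?_⟩
  · intro B hB
    obtain ⟨x, hxI, rfl⟩ := Finset.mem_image.mp hB
    exact ⟨x, mem_blockOf_iff.mpr ⟨hxI, connM_refl x⟩⟩
  · intro B hB
    obtain ⟨x, hxI, rfl⟩ := Finset.mem_image.mp hB
    exact Finset.filter_subset _ _
  · intro B hB B' hB' hne
    obtain ⟨x, hxI, rfl⟩ := Finset.mem_image.mp hB
    obtain ⟨x', hx'I, rfl⟩ := Finset.mem_image.mp hB'
    rw [Finset.disjoint_left]
    intro y hy hy'
    apply hne
    have hc1 := (mem_blockOf_iff.mp hy).2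
    have hc2 := (mem_blockOf_iff.mp hy').2
    have hxx' : connM M x x' := connM_trans hM hc1 (connM_symm hc2)
    ext w
    rw [mem_blockOf_iff, mem_blockOf_iff]
    constructor
    · rintro ⟨hwI, hc⟩
      exact ⟨hwI, connM_trans hM (connM_symm hxx') hc⟩
    · rintro ⟨hwI, hc⟩
      exact ⟨hwI, connM_trans hM hxx' hc⟩
  · intro x hx
    exact ⟨blockOf n M x, Finset.mem_image.mpr ⟨x, hx, rfl⟩,
      mem_blockOf_iff.mpr ⟨hx, connM_refl x⟩⟩

lemma stdRep_toPart (hM : IsMatching n M) : stdRep n (toPart n M) = M := by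
  ext p
  constructor
  · intro hp
    rw [stdRep, Finset.mem_filter] at hp
    obtain ⟨hpE, B, hB, h1, h2, h3⟩ := hp
    obtain ⟨x, hxI, rfl⟩ := Finset.mem_image.mp hB
    have hc1 := (mem_blockOf_iff.mp h1).2
    have hc2 := (mem_blockOf_iff.mp h2).2
    obtain ⟨z, hz1, hz2⟩ := connM_trans hM (connM_symm hc1) hc2
    have hE := mem_edgesOn.mp hpE
    rcases reach_comp_fwd hM hz1 hz2 with h | h
    · rcases Relation.ReflTransGen.cases_head h with heq | ⟨w, hw, hrest⟩
      · exact absurd heq (by omega)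
      · have hwle : w ≤ p.2 := reach_le hM hrest
        have hwgt : p.1 < w := (edge_facts hM hw).2.1
        by_cases hwp : w = p.2
        · have : (p.1, p.2) ∈ M := by rw [← hwp]; exact hw
          exact this
        · exfalso
          have hcw : connM M x w :=
            connM_trans hM hc1 ⟨p.1, .refl, Relation.ReflTransGen.single hw⟩
          have hwf := edge_facts hM hw
          have hwI : w ∈ Finset.Icc 1 n := Finset.mem_Icc.mpr ⟨by omega, hwf.2.2⟩
          exact h3 w (mem_blockOf_iff.mpr ⟨hwI, hcw⟩) ⟨hwgt, by omega⟩
    · have := reach_le hM h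
      omega
  · intro hp
    have hpE := hM.1 hp
    have hE := mem_edgesOn.mp hpE
    have h1I : p.1 ∈ Finset.Icc 1 n := Finset.mem_Icc.mpr ⟨hE.1.1, hE.1.2⟩
    have h2I : p.2 ∈ Finset.Icc 1 n := Finset.mem_Icc.mpr ⟨hE.2.1.1, hE.2.1.2⟩
    rw [stdRep, Finset.mem_filter]
    refine ⟨hpE, blockOf n M p.1, Finset.mem_image.mpr ⟨p.1, h1I, rfl⟩,
      mem_blockOf_iff.mpr ⟨h1I, connM_refl _⟩,
      mem_blockOf_iff.mpr ⟨h2I, ⟨p.1, .refl, Relation.ReflTransGen.single hp⟩⟩, ?_⟩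
    intro c hcB hcc
    obtain ⟨z, hz1, hzc⟩ := (mem_blockOf_iff.mp hcB).2
    rcases reach_comp_fwd hM hz1 hzc with h | h
    · rcases Relation.ReflTransGen.cases_head h with heq | ⟨w, hw, hrest⟩
      · omega
      · have hw2 : w = p.2 := congrArg Prod.snd (hM.2.1 _ hw _ hp rfl)
        rw [hw2] at hrest
        have := reach_le hM hrest
        omega
    · have := reach_le hM h
      omega

lemma stdRep_isMatching (hπ : IsPartition n π) : IsMatching n (stdRep n π) := by
  obtain ⟨hne, hsub, hdisj, hcov⟩ := hπ
  refine ⟨Finset.filter_subset _ _, ?_, ?_⟩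
  · intro p hp q hq hpq
    rw [stdRep, Finset.mem_filter] at hp hq
    obtain ⟨hpE, B, hB, hp1, hp2, hp3⟩ := hp
    obtain ⟨hqE, B', hB', hq1, hq2, hq3⟩ := hq
    have hBB : B = B' := by
      by_contra hc
      exact (Finset.disjoint_left.mp (hdisj B hB B' hB' hc)) hp1 (hpq ▸ hq1)
    subst hBB
    have hpE' := mem_edgesOn.mp hpE
    have hqE' := mem_edgesOn.mp hqE
    rcases lt_trichotomy p.2 q.2 with h | h | h
    · exact absurd (⟨by omega, h⟩ : q.1 < p.2 ∧ p.2 < q.2) (hq3 p.2 hp2)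
    · exact Prod.ext hpq h
    · exact absurd (⟨by omega, h⟩ : p.1 < q.2 ∧ q.2 < p.2) (hp3 q.2 hq2)
  · intro p hp q hq hpq
    rw [stdRep, Finset.mem_filter] at hp hq
    obtain ⟨hpE, B, hB, hp1, hp2, hp3⟩ := hp
    obtain ⟨hqE, B', hB', hq1, hq2, hq3⟩ := hq
    have hBB : B = B' := by
      by_contra hc
      exact (Finset.disjoint_left.mp (hdisj B hB B' hB' hc)) hp2 (hpq ▸ hq2)
    subst hBB
    have hpE' := mem_edgesOn.mp hpE
    have hqE' := mem_edgesOn.mp hqE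
    rcases lt_trichotomy p.1 q.1 with h | h | h
    · exact absurd (⟨h, by omega⟩ : p.1 < q.1 ∧ q.1 < p.2) (hp3 q.1 hq1)
    · exact Prod.ext h hpq
    · exact absurd (⟨h, by omega⟩ : q.1 < p.1 ∧ p.1 < q.2) (hq3 p.1 hp1)

lemma reach_min (hπ : IsPartition n π) {B : Finset ℕ} (hB : B ∈ π) :
    ∀ x ∈ B, reach (stdRep n π) (B.min' (hπ.1 B hB)) x := by
  intro x
  induction x using Nat.strong_induction_on with
  | _ x ih =>
    intro hx
    by_cases hmin : x = B.min' (hπ.1 B hB)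
    · rw [hmin]
      exact Relation.ReflTransGen.refl
    · have hlt : B.min' (hπ.1 B hB) < x :=
        lt_of_le_of_ne (Finset.min'_le B x hx) (Ne.symm hmin)
      have hne : (B.filter (· < x)).Nonempty :=
        ⟨B.min' (hπ.1 B hB), Finset.mem_filter.mpr ⟨Finset.min'_mem _ _, hlt⟩⟩
      have hcB : (B.filter (· < x)).max' hne ∈ B ∧ (B.filter (· < x)).max' hne < x := by
        have := Finset.max'_mem _ hne
        rwa [Finset.mem_filter] at this
      have harc : ((B.filter (· < x)).max' hne, x) ∈ stdRep n π := by
        rw [stdRep, Finset.mem_filter]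
        constructor
        · rw [mem_edgesOn]
          have h1 := Finset.mem_Icc.mp (hπ.2.1 B hB hcB.1)
          have h2 := Finset.mem_Icc.mp (hπ.2.1 B hB hx)
          exact ⟨⟨h1.1, h1.2⟩, ⟨h2.1, h2.2⟩, hcB.2⟩
        · refine ⟨B, hB, hcB.1, hx, ?_⟩
          intro d hd hdd
          have hmem : d ∈ B.filter (· < x) := Finset.mem_filter.mpr ⟨hd, hdd.2⟩
          have := Finset.le_max' _ d hmem
          omega
      exact (ih _ hcB.2 hcB.1).tail harc

lemma reach_mem_block (hπ : IsPartition n π) {B : Finset ℕ} (hB : B ∈ π) {x y : ℕ}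
    (hx : x ∈ B) (h : reach (stdRep n π) x y) : y ∈ B := by
  induction h with
  | refl => exact hx
  | tail h1 harc ih =>
    rw [stdRep, Finset.mem_filter] at harc
    obtain ⟨-, B', hB', hb, hc, -⟩ := harc
    have hBB : B = B' := by
      by_contra hcon
      exact (Finset.disjoint_left.mp (hπ.2.2.1 B hB B' hB' hcon)) ih hb
    rw [hBB]
    exact hc

lemma blockOf_stdRep (hπ : IsPartition n π) {B : Finset ℕ} (hB : B ∈ π) {x : ℕ}
    (hx : x ∈ B) : blockOf n (stdRep n π) x = B := by
  ext y
  rw [mem_blockOf_iff]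
  constructor
  · rintro ⟨hyI, z, hzx, hzy⟩
    rcases Relation.ReflTransGen.cases_head hzx with rfl | ⟨w, hw, hrest⟩
    · exact reach_mem_block hπ hB hx hzy
    · rw [stdRep, Finset.mem_filter] at hw
      obtain ⟨-, B', hB', hz, hw', -⟩ := hw
      have hxB' : x ∈ B' := reach_mem_block hπ hB' hz hzx
      have hBB : B = B' := by
        by_contra hcon
        exact (Finset.disjoint_left.mp (hπ.2.2.1 B hB B' hB' hcon)) hx hxB'
      rw [hBB]
      exact reach_mem_block hπ hB' hz hzy
  · intro hyB
    refine ⟨hπ.2.1 B hB hyB, B.min' (hπ.1 B hB), reach_min hπ hB x hx, reach_min hπ hB y hyB⟩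

lemma toPart_stdRep (hπ : IsPartition n π) : toPart n (stdRep n π) = π := by
  ext B
  rw [toPart, Finset.mem_image]
  constructor
  · rintro ⟨x, hxI, rfl⟩
    obtain ⟨Bx, hBx, hxB⟩ := hπ.2.2.2 x hxI
    rw [blockOf_stdRep hπ hBx hxB]
    exact hBx
  · intro hB
    obtain ⟨x, hxB⟩ := hπ.1 B hB
    exact ⟨x, hπ.2.1 B hB hxB, blockOf_stdRep hπ hB hxB⟩

end Part

lemma main_map (n k l : ℕ) {π : Finset (Finset ℕ)}
    (h : π ∈ ((Finset.Icc 1 n).powerset.powerset).filter fun π =>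
        IsPartition n π ∧ cros2 (stdRep n π) = k ∧ nest2 (stdRep n π) = l) :
    toPart n (Phi n (stdRep n π)) ∈
      ((Finset.Icc 1 n).powerset.powerset).filter fun π =>
        IsPartition n π ∧ cros2 (stdRep n π) = l ∧ nest2 (stdRep n π) = k := by
  rw [Finset.mem_filter] at h ⊢
  obtain ⟨hmem, hπ, hcr, hnes⟩ := h
  have hM := stdRep_isMatching hπ
  have hM' := phi_isMatching hM
  have hpart := toPart_isPartition hM'
  have hstd : stdRep n (toPart n (Phi n (stdRep n π))) = Phi n (stdRep n π) :=
    stdRep_toPart hM'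
  refine ⟨?_, hpart, ?_, ?_⟩
  · rw [Finset.mem_powerset]
    intro B hB
    rw [Finset.mem_powerset]
    exact hpart.2.1 B hB
  · rw [hstd, cros2_phi hM, hnes]
  · rw [hstd, nest2_phi hM, hcr]

lemma main_inv (n : ℕ) {π : Finset (Finset ℕ)} (hπ : IsPartition n π) :
    toPart n (Phi n (stdRep n (toPart n (Phi n (stdRep n π))))) = π := by
  have hM := stdRep_isMatching hπ
  have hM' := phi_isMatching hM
  rw [stdRep_toPart hM', phi_phi hM, toPart_stdRep hπ]

end CNsym

/-- The joint statistic `(cros₂, nest₂)` on standard representations is symmetrically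
distributed over set partitions of `[n]`. -/
theorem cros_nest_symmetric_over_partitions (n k ℓ : ℕ) :
    (((Finset.Icc 1 n).powerset.powerset).filter fun π =>
        IsPartition n π ∧ cros2 (stdRep n π) = k ∧ nest2 (stdRep n π) = ℓ).card =
    (((Finset.Icc 1 n).powerset.powerset).filter fun π =>
        IsPartition n π ∧ cros2 (stdRep n π) = ℓ ∧ nest2 (stdRep n π) = k).card := by
  classical
  refine Finset.card_bij' (fun π _ => CNsym.toPart n (CNsym.Phi n (stdRep n π)))
    (fun π _ => CNsym.toPart n (CNsym.Phi n (stdRep n π))) ?_ ?_ ?_ ?_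
  · intro a ha
    exact CNsym.main_map n k ℓ ha
  · intro a ha
    exact CNsym.main_map n ℓ k ha
  · intro a ha
    exact CNsym.main_inv n ((Finset.mem_filter.mp ha).2.1)
  · intro a ha
    exact CNsym.main_inv n ((Finset.mem_filter.mp ha).2.1)
end

section
/- For a rectangular m × n board, the joint statistic (ne₂, se₂) is symmetrically distributed over 01-fillings with exactly one 1 in each row and at most one 1 in each column: i.e., the number of such fillings with k ascents and ℓ descents equals the number with ℓ ascents and k descents. -/
/-- Reflection of a column index within `1..n`. -/
def flipN (n j : ℕ) : ℕ := if 1 ≤ j ∧ j ≤ n then n + 1 - j else j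

lemma flipN_invol (n : ℕ) : Function.Involutive (flipN n) := by
  intro j
  unfold flipN
  split
  · split <;> omega
  · rfl

lemma flipN_mem {n j : ℕ} (h1 : 1 ≤ j) (h2 : j ≤ n) : 1 ≤ flipN n j ∧ flipN n j ≤ n := by
  unfold flipN; split <;> omega

lemma flipN_lt {n a b : ℕ} (ha1 : 1 ≤ a) (ha2 : a ≤ n) (hb1 : 1 ≤ b) (hb2 : b ≤ n) :
    flipN n a < flipN n b ↔ b < a := by
  unfold flipN; split <;> split <;> omega

/-- Reflection of a cell: keep row, flip column. -/
def flipC (n : ℕ) (c : ℕ × ℕ) : ℕ × ℕ := (c.1, flipN n c.2)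

lemma flipC_invol (n : ℕ) : Function.Involutive (flipC n) := by
  intro c; simp [flipC, flipN_invol n c.2]

lemma mem_image_flipC {n : ℕ} {F : Finset (ℕ × ℕ)} {c : ℕ × ℕ} :
    c ∈ F.image (flipC n) ↔ flipC n c ∈ F := by
  constructor
  · intro h
    obtain ⟨d, hd, rfl⟩ := Finset.mem_image.1 h
    rwa [flipC_invol]
  · intro h
    exact Finset.mem_image.2 ⟨_, h, flipC_invol n c⟩

lemma image_image_flipC {n : ℕ} (F : Finset (ℕ × ℕ)) :
    (F.image (flipC n)).image (flipC n) = F := by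
  rw [Finset.image_image, Function.Involutive.comp_self (flipC_invol n), Finset.image_id]

open Classical in
/-- Fillings of the `m × n` board (rows labeled `1..m`, columns `1..n`) with exactly one
`1` in each row and at most one `1` in each column; a filling is identified with its set
of cells containing a `1`. -/
noncomputable def rowFillings (m n : ℕ) : Finset (Finset (ℕ × ℕ)) :=
  ((Finset.Icc 1 m ×ˢ Finset.Icc 1 n).powerset).filter fun F =>
    (∀ i ∈ Finset.Icc 1 m, (F.filter fun c => c.1 = i).card = 1) ∧
    (∀ j ∈ Finset.Icc 1 n, (F.filter fun c => c.2 = j).card ≤ 1)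

/-- Number of ascents (NE chains of length 2): pairs of `1`s, one strictly above and
strictly to the right of the other. -/
def ne2 (F : Finset (ℕ × ℕ)) : ℕ :=
  ((F ×ˢ F).filter fun p => p.1.1 < p.2.1 ∧ p.2.2 < p.1.2).card

/-- Number of descents (SE chains of length 2): pairs of `1`s, one strictly below and
strictly to the right of the other. -/
def se2 (F : Finset (ℕ × ℕ)) : ℕ :=
  ((F ×ˢ F).filter fun p => p.1.1 < p.2.1 ∧ p.1.2 < p.2.2).card

lemma col_bounds {m n : ℕ} {F : Finset (ℕ × ℕ)} (hF : F ∈ rowFillings m n) :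
    ∀ c ∈ F, 1 ≤ c.2 ∧ c.2 ≤ n := by
  intro c hc
  simp only [rowFillings, Finset.mem_filter, Finset.mem_powerset] at hF
  have := hF.1 hc
  simp only [Finset.mem_product, Finset.mem_Icc] at this
  exact this.2

lemma image_mem {m n : ℕ} {F : Finset (ℕ × ℕ)} (hF : F ∈ rowFillings m n) :
    F.image (flipC n) ∈ rowFillings m n := by
  classical
  simp only [rowFillings, Finset.mem_filter, Finset.mem_powerset] at hF ⊢
  obtain ⟨hsub, hrow, hcol⟩ := hF
  have hcell : ∀ c ∈ F, (1 ≤ c.1 ∧ c.1 ≤ m) ∧ (1 ≤ c.2 ∧ c.2 ≤ n) := by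
    intro c hc
    have := hsub hc
    simpa only [Finset.mem_product, Finset.mem_Icc] using this
  refine ⟨?_, ?_, ?_⟩
  · intro c hc
    obtain ⟨d, hd, rfl⟩ := Finset.mem_image.1 hc
    have h1 := hcell d hd
    have h2 := flipN_mem h1.2.1 h1.2.2
    simp only [flipC, Finset.mem_product, Finset.mem_Icc]
    exact ⟨h1.1, h2⟩
  · intro i hi
    rw [Finset.filter_image]
    rw [Finset.card_image_of_injective _ (flipC_invol n).injective]
    have : (F.filter fun a => (flipC n a).1 = i) = F.filter fun c => c.1 = i := by
      apply Finset.filter_congr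
      intro c _
      simp [flipC]
    rw [this]
    exact hrow i hi
  · intro j hj
    rw [Finset.filter_image]
    rw [Finset.card_image_of_injective _ (flipC_invol n).injective]
    simp only [Finset.mem_Icc] at hj
    have : (F.filter fun a => (flipC n a).2 = j) = F.filter fun c => c.2 = flipN n j := by
      apply Finset.filter_congr
      intro c hc
      have hb := (hcell c hc).2
      simp only [flipC]
      constructor
      · intro h; rw [← h, flipN_invol]
      · intro h; rw [h, flipN_invol]
    rw [this]
    have hm := flipN_mem hj.1 hj.2
    exact hcol _ (Finset.mem_Icc.2 hm)

lemma ne2_image {n : ℕ} {F : Finset (ℕ × ℕ)} (hc : ∀ c ∈ F, 1 ≤ c.2 ∧ c.2 ≤ n) :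
    ne2 (F.image (flipC n)) = se2 F := by
  classical
  unfold ne2 se2
  apply Finset.card_nbij' (fun p => (flipC n p.1, flipC n p.2)) (fun p => (flipC n p.1, flipC n p.2))
  · intro p hp
    simp only [Finset.mem_coe, Finset.mem_filter, Finset.mem_product, mem_image_flipC] at hp
    obtain ⟨⟨h1, h2⟩, h3, h4⟩ := hp
    have b1 := hc _ h1
    have b2 := hc _ h2
    simp only [flipC] at b1 b2 ⊢
    simp only [Finset.mem_coe, Finset.mem_filter, Finset.mem_product]
    refine ⟨⟨h1, h2⟩, h3, ?_⟩
    -- goal: flipN n p.1.2 < flipN n p.2.2, from h4 : p.2.2 < p.1.2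
    have e1 : 1 ≤ p.1.2 ∧ p.1.2 ≤ n := by
      have := flipN_mem b1.1 b1.2
      rw [flipN_invol] at this
      exact this
    have e2 : 1 ≤ p.2.2 ∧ p.2.2 ≤ n := by
      have := flipN_mem b2.1 b2.2
      rw [flipN_invol] at this
      exact this
    exact (flipN_lt e1.1 e1.2 e2.1 e2.2).2 h4
  · intro q hq
    simp only [Finset.mem_coe, Finset.mem_filter, Finset.mem_product] at hq
    obtain ⟨⟨h1, h2⟩, h3, h4⟩ := hq
    have b1 := hc _ h1
    have b2 := hc _ h2
    simp only [Finset.mem_coe, Finset.mem_filter, Finset.mem_product, mem_image_flipC,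
      flipC_invol n q.1, flipC_invol n q.2]
    refine ⟨⟨h1, h2⟩, h3, ?_⟩
    simp only [flipC]
    exact (flipN_lt b2.1 b2.2 b1.1 b1.2).2 h4
  · intro p _
    simp [flipC_invol n p.1, flipC_invol n p.2]
  · intro q _
    simp [flipC_invol n q.1, flipC_invol n q.2]

lemma se2_image {n : ℕ} {F : Finset (ℕ × ℕ)} (hc : ∀ c ∈ F, 1 ≤ c.2 ∧ c.2 ≤ n) :
    se2 (F.image (flipC n)) = ne2 F := by
  have hc' : ∀ c ∈ F.image (flipC n), 1 ≤ c.2 ∧ c.2 ≤ n := by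
    intro c hcmem
    obtain ⟨d, hd, rfl⟩ := Finset.mem_image.1 hcmem
    have := hc d hd
    exact flipN_mem this.1 this.2
  have h := ne2_image (n := n) hc'
  rw [image_image_flipC] at h
  omega

/-- The joint statistic `(ne₂, se₂)` is symmetrically distributed over 01-fillings of
the `m × n` rectangular board with exactly one `1` per row and at most one per column. -/
theorem ne_se_symmetric_over_rectangles (m n k ℓ : ℕ) :
    ((rowFillings m n).filter fun F => ne2 F = k ∧ se2 F = ℓ).card =
    ((rowFillings m n).filter fun F => ne2 F = ℓ ∧ se2 F = k).card := by
  classical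
  apply Finset.card_nbij' (fun F => F.image (flipC n)) (fun F => F.image (flipC n))
  · intro F hF
    simp only [Finset.mem_coe, Finset.mem_filter] at hF ⊢
    obtain ⟨h1, h2, h3⟩ := hF
    have hc := col_bounds h1
    exact ⟨image_mem h1, by rw [ne2_image hc, h3], by rw [se2_image hc, h2]⟩
  · intro F hF
    simp only [Finset.mem_coe, Finset.mem_filter] at hF ⊢
    obtain ⟨h1, h2, h3⟩ := hF
    have hc := col_bounds h1
    exact ⟨image_mem h1, by rw [ne2_image hc, h3], by rw [se2_image hc, h2]⟩
  · intro F _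
    exact image_image_flipC F
  · intro F _
    exact image_image_flipC F
end

section
/- The linear representation map π ↦ G_π is a bijection between linked partitions of [n] and simple graphs G on [n] such that every element of the multiset right(G) of right endpoints has multiplicity one. -/
/-- Two finite sets are nearly disjoint if every common element `i` satisfies
`(i = min E, |E| > 1, i ≠ min F)` or `(i = min F, |F| > 1, i ≠ min E)`. -/
abbrev NearlyDisjoint (E F : Finset ℕ) : Prop :=
  ∀ i ∈ E ∩ F,
    (E.min = (i : WithBot ℕ) ∧ 1 < E.card ∧ F.min ≠ (i : WithBot ℕ)) ∨
    (F.min = (i : WithBot ℕ) ∧ 1 < F.card ∧ E.min ≠ (i : WithBot ℕ))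

/-- `π` is a linked partition of `[n]`: nonempty pairwise nearly-disjoint blocks whose
union is `[n]`. -/
abbrev IsLinkedPartition (n : ℕ) (π : Finset (Finset ℕ)) : Prop :=
  (∀ B ∈ π, B.Nonempty) ∧ (∀ B ∈ π, B ⊆ Finset.Icc 1 n) ∧
  (∀ B ∈ π, ∀ C ∈ π, B ≠ C → NearlyDisjoint B C) ∧
  (∀ x ∈ Finset.Icc 1 n, ∃ B ∈ π, x ∈ B)

open Classical in
/-- The linear representation of a linked partition: an arc `(i,j)` iff `i < j` and `j`
lies in a block `B` with `min B = i`. -/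
noncomputable def linkRep (n : ℕ) (π : Finset (Finset ℕ)) : Finset (ℕ × ℕ) :=
  (edgesOn n).filter fun e => ∃ B ∈ π, B.min = (e.1 : WithBot ℕ) ∧ e.2 ∈ B

/-! ### Auxiliary definitions and lemmas -/

lemma natCast_bot (i : ℕ) : ((i : WithBot ℕ)) = WithTop.some i := by
  rw [Nat.cast_withBot]; rfl

def succG (G : Finset (ℕ × ℕ)) (i : ℕ) : Finset ℕ :=
  (G.filter fun e => e.1 = i).image Prod.snd

def invRep (n : ℕ) (G : Finset (ℕ × ℕ)) : Finset (Finset ℕ) :=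
  ((Finset.Icc 1 n).filter fun i => (succG G i).Nonempty ∨ ∀ e ∈ G, e.2 ≠ i).image
    fun i => insert i (succG G i)

lemma mem_succG {G : Finset (ℕ × ℕ)} {i j : ℕ} : j ∈ succG G i ↔ (i, j) ∈ G := by
  simp only [succG, Finset.mem_image, Finset.mem_filter]
  constructor
  · rintro ⟨⟨a, b⟩, ⟨hab, rfl⟩, rfl⟩; exact hab
  · intro h; exact ⟨(i, j), ⟨h, rfl⟩, rfl⟩

lemma mem_edgesOn {n : ℕ} {e : ℕ × ℕ} :
    e ∈ edgesOn n ↔ 1 ≤ e.1 ∧ e.2 ≤ n ∧ e.1 < e.2 := by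
  obtain ⟨a, b⟩ := e
  simp only [edgesOn, Finset.mem_filter, Finset.mem_product, Finset.mem_Icc]
  constructor
  · rintro ⟨⟨⟨h1, _⟩, ⟨_, h4⟩⟩, h5⟩; exact ⟨h1, h4, h5⟩
  · rintro ⟨h1, h4, h5⟩
    exact ⟨⟨⟨h1, le_trans (le_of_lt h5) h4⟩, ⟨le_trans h1 (le_of_lt h5), h4⟩⟩, h5⟩

lemma min_insert_succG {n : ℕ} {G : Finset (ℕ × ℕ)} (hG : G ⊆ edgesOn n) (i : ℕ) :
    (insert i (succG G i)).min = (i : WithBot ℕ) := by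
  rw [natCast_bot]
  apply le_antisymm
  · exact Finset.min_le (Finset.mem_insert_self i _)
  · apply Finset.le_min
    intro b hb
    rcases Finset.mem_insert.mp hb with rfl | hb
    · exact le_rfl
    · have hib : i < b := (mem_edgesOn.mp (hG (mem_succG.mp hb))).2.2
      exact_mod_cast le_of_lt hib

/-- distinct blocks of a linked partition have distinct minima -/
lemma min_injOn {n : ℕ} {π : Finset (Finset ℕ)} (hπ : IsLinkedPartition n π)
    {B C : Finset ℕ} (hB : B ∈ π) (hC : C ∈ π) (h : B.min = C.min) : B = C := by
  by_contra hne
  obtain ⟨m, hm⟩ := Finset.min_of_nonempty (hπ.1 B hB)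
  have hmB : m ∈ B := Finset.mem_of_min hm
  have hmC : m ∈ C := Finset.mem_of_min (h ▸ hm)
  have hm' : B.min = (m : WithBot ℕ) := by rw [natCast_bot]; exact hm
  rcases hπ.2.2.1 B hB C hC hne m (Finset.mem_inter.mpr ⟨hmB, hmC⟩) with
    ⟨_, _, h3⟩ | ⟨_, _, h3⟩
  · exact h3 (h ▸ hm')
  · exact h3 hm'

open Classical in
/-- A block `B` of `π` with minimum `m` equals `{m} ∪ succ m` in `linkRep`. -/
lemma block_eq {n : ℕ} {π : Finset (Finset ℕ)} (hπ : IsLinkedPartition n π)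
    {B : Finset ℕ} (hB : B ∈ π) {m : ℕ} (hm : B.min = (m : WithBot ℕ)) :
    insert m (succG (linkRep n π) m) = B := by
  rw [natCast_bot] at hm
  have hmB : m ∈ B := Finset.mem_of_min hm
  apply Finset.Subset.antisymm
  · intro j hj
    rcases Finset.mem_insert.mp hj with rfl | hj
    · exact hmB
    · obtain ⟨hedge, C, hC, hCmin, hjC⟩ :=
        Finset.mem_filter.mp (mem_succG.mp hj)
      rw [natCast_bot] at hCmin
      have : C = B := min_injOn hπ hC hB (hCmin.trans hm.symm)
      exact this ▸ hjC
  · intro j hj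
    rcases eq_or_ne j m with rfl | hne
    · exact Finset.mem_insert_self _ _
    · apply Finset.mem_insert_of_mem
      apply mem_succG.mpr
      have hmlt : m < j := by
        have h1 : B.min ≤ WithTop.some j := Finset.min_le hj
        rw [hm] at h1
        have : m ≤ j := by exact_mod_cast h1
        exact lt_of_le_of_ne this (Ne.symm hne)
      have hjn := Finset.mem_Icc.mp (hπ.2.1 B hB hj)
      have hmn := Finset.mem_Icc.mp (hπ.2.1 B hB hmB)
      apply Finset.mem_filter.mpr
      refine ⟨mem_edgesOn.mpr ⟨hmn.1, hjn.2, hmlt⟩, B, hB, ?_, hj⟩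
      rw [natCast_bot]; exact hm

open Classical in
/-- `invRep` is a left inverse of `linkRep` on linked partitions. -/
lemma left_inv {n : ℕ} {π : Finset (Finset ℕ)} (hπ : IsLinkedPartition n π) :
    invRep n (linkRep n π) = π := by
  set G := linkRep n π with hGdef
  have hGsub : G ⊆ edgesOn n := Finset.filter_subset _ _
  apply Finset.Subset.antisymm
  · intro B hB
    obtain ⟨i, hi, rfl⟩ := Finset.mem_image.mp hB
    obtain ⟨hin, hsel⟩ := Finset.mem_filter.mp hi
    rcases hsel with ⟨j, hj⟩ | hnoin
    · obtain ⟨_, C, hC, hCmin, _⟩ := Finset.mem_filter.mp (mem_succG.mp hj)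
      exact (block_eq hπ hC hCmin) ▸ hC
    · obtain ⟨C, hC, hiC⟩ := hπ.2.2.2 i hin
      obtain ⟨m, hm⟩ := Finset.min_of_nonempty (hπ.1 C hC)
      have hmC : m ∈ C := Finset.mem_of_min hm
      have hmi : m = i := by
        by_contra hne
        have hmle : WithTop.some m ≤ WithTop.some i := by
          rw [← hm]; exact Finset.min_le hiC
        have hmlt : m < i := lt_of_le_of_ne (by exact_mod_cast hmle) hne
        have harc : ((m, i) : ℕ × ℕ) ∈ G := by
          apply Finset.mem_filter.mpr
          refine ⟨mem_edgesOn.mpr ⟨(Finset.mem_Icc.mp (hπ.2.1 C hC hmC)).1,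
            (Finset.mem_Icc.mp hin).2, hmlt⟩, C, hC, ?_, hiC⟩
          rw [natCast_bot]; exact hm
        exact hnoin (m, i) harc rfl
      subst hmi
      have hm' : C.min = (m : WithBot ℕ) := by rw [natCast_bot]; exact hm
      exact (block_eq hπ hC hm') ▸ hC
  · intro B hB
    obtain ⟨m, hm⟩ := Finset.min_of_nonempty (hπ.1 B hB)
    have hmB : m ∈ B := Finset.mem_of_min hm
    have hm' : B.min = (m : WithBot ℕ) := by rw [natCast_bot]; exact hm
    have hBeq := block_eq hπ hB hm'
    apply Finset.mem_image.mpr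
    refine ⟨m, Finset.mem_filter.mpr ⟨hπ.2.1 B hB hmB, ?_⟩, hBeq⟩
    rcases (succG G m).eq_empty_or_nonempty with hemp | hne
    · right
      rintro ⟨k, j⟩ hkj hjm
      simp only at hjm
      subst hjm
      obtain ⟨hedge, C, hC, hCmin, hjC⟩ := Finset.mem_filter.mp hkj
      rw [natCast_bot] at hCmin
      have hkj' : k < j := (mem_edgesOn.mp hedge).2.2
      have hne' : B ≠ C := by
        rintro rfl
        rw [hm] at hCmin
        have hCmin' : WithTop.some j = WithTop.some k := hCmin
        have : j = k := by exact_mod_cast hCmin'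
        omega
      rcases hπ.2.2.1 B hB C hC hne' j
          (Finset.mem_inter.mpr ⟨Finset.mem_of_min hm, hjC⟩) with
        ⟨h1, h2, h3⟩ | ⟨h1, _, _⟩
      · have hBj : B = {j} := by rw [← hBeq, hemp]; rfl
        rw [hBj] at h2; simp at h2
      · rw [natCast_bot] at h1
        rw [hCmin] at h1
        have h1' : WithTop.some k = WithTop.some j := h1
        have : k = j := by exact_mod_cast h1'
        omega
    · exact Or.inl hne

/-- `invRep G` is a linked partition when `G` is a valid graph. -/
lemma invRep_isLinked {n : ℕ} {G : Finset (ℕ × ℕ)} (hG : G ⊆ edgesOn n)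
    (hnd : (rightM G).Nodup) : IsLinkedPartition n (invRep n G) := by
  have hinj : ∀ x ∈ G, ∀ y ∈ G, x.2 = y.2 → x = y := fun x hx y hy h =>
    Multiset.inj_on_of_nodup_map hnd x hx y hy h
  refine ⟨?_, ?_, ?_, ?_⟩
  · intro B hB
    obtain ⟨i, _, rfl⟩ := Finset.mem_image.mp hB
    exact ⟨i, Finset.mem_insert_self _ _⟩
  · intro B hB
    obtain ⟨i, hi, rfl⟩ := Finset.mem_image.mp hB
    intro j hj
    rcases Finset.mem_insert.mp hj with rfl | hj
    · exact (Finset.mem_filter.mp hi).1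
    · have he := mem_edgesOn.mp (hG (mem_succG.mp hj))
      exact Finset.mem_Icc.mpr ⟨by omega, he.2.1⟩
  · intro B hB C hC hne x hx
    obtain ⟨i, hi, rfl⟩ := Finset.mem_image.mp hB
    obtain ⟨i', hi', rfl⟩ := Finset.mem_image.mp hC
    obtain ⟨hxB, hxC⟩ := Finset.mem_inter.mp hx
    have hii' : i ≠ i' := fun h => hne (by rw [h])
    have hBmin := min_insert_succG hG i
    have hCmin := min_insert_succG hG i'
    -- cases on x
    rcases Finset.mem_insert.mp hxB with rfl | hxB'
    · rcases Finset.mem_insert.mp hxC with h | hxC'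
      · exact absurd h hii'
      · -- x = i, x ∈ succG G i' : arc (i', x) ∈ G, so succG G x nonempty
        left
        refine ⟨hBmin, ?_, ?_⟩
        · -- 1 < card: succG G x is nonempty since x has incoming arc
          have hsel := (Finset.mem_filter.mp hi).2
          have hxin : (∃ e ∈ G, e.2 = x) := ⟨(i', x), mem_succG.mp hxC', rfl⟩
          have hsne : (succG G x).Nonempty := by
            rcases hsel with h | h
            · exact h
            · obtain ⟨e, he, he2⟩ := hxin; exact absurd he2 (h e he)
          obtain ⟨j, hj⟩ := hsne
          have : x ∉ succG G x := fun h =>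
            absurd (mem_edgesOn.mp (hG (mem_succG.mp h))).2.2 (lt_irrefl x)
          rw [Finset.card_insert_of_notMem this]
          have := Finset.card_pos.mpr ⟨j, hj⟩
          omega
        · rw [hCmin]
          intro h
          rw [natCast_bot, natCast_bot] at h
          exact hii'.symm (by exact_mod_cast h)
    · rcases Finset.mem_insert.mp hxC with rfl | hxC'
      · -- symmetric: x = i', x ∈ succG G i
        right
        refine ⟨hCmin, ?_, ?_⟩
        · have hsel := (Finset.mem_filter.mp hi').2
          have hxin : (∃ e ∈ G, e.2 = x) := ⟨(i, x), mem_succG.mp hxB', rfl⟩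
          have hsne : (succG G x).Nonempty := by
            rcases hsel with h | h
            · exact h
            · obtain ⟨e, he, he2⟩ := hxin; exact absurd he2 (h e he)
          obtain ⟨j, hj⟩ := hsne
          have : x ∉ succG G x := fun h =>
            absurd (mem_edgesOn.mp (hG (mem_succG.mp h))).2.2 (lt_irrefl x)
          rw [Finset.card_insert_of_notMem this]
          have := Finset.card_pos.mpr ⟨j, hj⟩
          omega
        · rw [hBmin]
          intro h
          rw [natCast_bot, natCast_bot] at h
          exact hii' (by exact_mod_cast h)
      · -- x ∈ succG G i and x ∈ succG G i': two incoming arcs, contradiction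
        have h2 := hinj (i, x) (mem_succG.mp hxB') (i', x) (mem_succG.mp hxC') rfl
        exact absurd (congrArg Prod.fst h2) hii'
  · intro x hx
    by_cases hxin : ∃ e ∈ G, e.2 = x
    · obtain ⟨⟨i, j⟩, he, hj⟩ := hxin
      simp only at hj
      subst hj
      obtain ⟨h1, h2, h3⟩ := mem_edgesOn.mp (hG he)
      have h1' : 1 ≤ i := h1
      have h3' : i < j := h3
      have h2' : j ≤ n := h2
      have hiIcc : i ∈ Finset.Icc 1 n := Finset.mem_Icc.mpr ⟨h1', by omega⟩
      refine ⟨insert i (succG G i), Finset.mem_image.mpr ⟨i,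
        Finset.mem_filter.mpr ⟨hiIcc, Or.inl ⟨j, mem_succG.mpr he⟩⟩, rfl⟩,
        Finset.mem_insert_of_mem (mem_succG.mpr he)⟩
    · push_neg at hxin
      refine ⟨insert x (succG G x), Finset.mem_image.mpr ⟨x,
        Finset.mem_filter.mpr ⟨hx, Or.inr hxin⟩, rfl⟩, Finset.mem_insert_self _ _⟩

/-- `invRep` is a right inverse of `linkRep`. -/
lemma right_inv {n : ℕ} {G : Finset (ℕ × ℕ)} (hG : G ⊆ edgesOn n) :
    linkRep n (invRep n G) = G := by
  ext ⟨i, j⟩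
  simp only [linkRep, Finset.mem_filter]
  constructor
  · rintro ⟨hedge, B, hB, hBmin, hjB⟩
    obtain ⟨k, hk, rfl⟩ := Finset.mem_image.mp hB
    have hkmin := min_insert_succG hG k
    have : k = i := by
      rw [hkmin] at hBmin
      rw [natCast_bot, natCast_bot] at hBmin
      exact_mod_cast hBmin
    subst this
    have hij : k < j := (mem_edgesOn.mp hedge).2.2
    rcases Finset.mem_insert.mp hjB with rfl | hj
    · omega
    · exact mem_succG.mp hj
  · intro h
    have hedge := hG h
    have hmem := mem_edgesOn.mp hedge
    refine ⟨hedge, insert i (succG G i), Finset.mem_image.mpr ⟨i,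
      Finset.mem_filter.mpr ⟨Finset.mem_Icc.mpr ⟨hmem.1, by omega⟩,
        Or.inl ⟨j, mem_succG.mpr h⟩⟩, rfl⟩,
      min_insert_succG hG i, Finset.mem_insert_of_mem (mem_succG.mpr h)⟩

open Classical in
/-- `linkRep` maps into the target set. -/
lemma linkRep_mapsTo {n : ℕ} {π : Finset (Finset ℕ)} (hπ : IsLinkedPartition n π) :
    linkRep n π ⊆ edgesOn n ∧ (rightM (linkRep n π)).Nodup := by
  refine ⟨Finset.filter_subset _ _, ?_⟩
  apply Multiset.Nodup.map_on _ (linkRep n π).nodup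
  rintro ⟨i, j⟩ hij ⟨i', j'⟩ hij' h
  simp only at h
  subst h
  obtain ⟨hedge, B, hB, hBmin, hjB⟩ := Finset.mem_filter.mp hij
  obtain ⟨hedge', C, hC, hCmin, hjC⟩ := Finset.mem_filter.mp hij'
  have hij1 : i < j := (mem_edgesOn.mp hedge).2.2
  have hij2 : i' < j := (mem_edgesOn.mp hedge').2.2
  have hBC : B = C := by
    by_contra hne
    rcases hπ.2.2.1 B hB C hC hne j (Finset.mem_inter.mpr ⟨hjB, hjC⟩) with
      ⟨h1, _, _⟩ | ⟨h1, _, _⟩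
    · rw [hBmin] at h1
      rw [natCast_bot, natCast_bot] at h1
      have : i = j := by exact_mod_cast h1
      omega
    · rw [hCmin] at h1
      rw [natCast_bot, natCast_bot] at h1
      have : i' = j := by exact_mod_cast h1
      omega
  subst hBC
  rw [hBmin] at hCmin
  rw [natCast_bot, natCast_bot] at hCmin
  have : i = i' := by exact_mod_cast hCmin
  simp [this]

/-- The linear representation is a bijection between linked partitions of `[n]` and
simple graphs on `[n]` in which every right endpoint has multiplicity one. -/
theorem linkRep_bijective (n : ℕ) :
    Set.BijOn (linkRep n) {π | IsLinkedPartition n π}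
      {G | G ⊆ edgesOn n ∧ (rightM G).Nodup} := by
  apply Set.InvOn.bijOn (f' := invRep n)
  · constructor
    · intro π hπ
      exact left_inv hπ
    · intro G hG
      exact right_inv hG.1
  · intro π hπ
    exact linkRep_mapsTo hπ
  · intro G hG
    exact invRep_isLinked hG.1 hG.2
end

section
/- The standard representation map π ↦ St_π is a bijection between set partitions of [n] and simple graphs G on [n] such that all elements of left(G) have multiplicity one and all elements of right(G) have multiplicity one. -/
open scoped Classical

namespace Std0

def Reach (G : Finset (ℕ × ℕ)) : ℕ → ℕ → Prop :=
  Relation.ReflTransGen (fun a b => (a, b) ∈ G)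

def Conn (G : Finset (ℕ × ℕ)) (a b : ℕ) : Prop := Reach G a b ∨ Reach G b a

noncomputable def blockOf (n : ℕ) (G : Finset (ℕ × ℕ)) (x : ℕ) : Finset ℕ :=
  (Finset.Icc 1 n).filter fun y => Conn G x y

noncomputable def invMap (n : ℕ) (G : Finset (ℕ × ℕ)) : Finset (Finset ℕ) :=
  (Finset.Icc 1 n).image (blockOf n G)

lemma mem_edgesOn {n : ℕ} {e : ℕ × ℕ} :
    e ∈ edgesOn n ↔ (e.1 ∈ Finset.Icc 1 n ∧ e.2 ∈ Finset.Icc 1 n) ∧ e.1 < e.2 := by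
  simp [edgesOn, Finset.mem_filter, Finset.mem_product]

section
variable {n : ℕ} {G : Finset (ℕ × ℕ)} (hG : G ⊆ edgesOn n)
include hG

lemma rel_lt {a b : ℕ} (h : (a, b) ∈ G) : a < b := (mem_edgesOn.1 (hG h)).2
lemma rel_mem_left {a b : ℕ} (h : (a, b) ∈ G) : a ∈ Finset.Icc 1 n :=
  (mem_edgesOn.1 (hG h)).1.1
lemma rel_mem_right {a b : ℕ} (h : (a, b) ∈ G) : b ∈ Finset.Icc 1 n :=
  (mem_edgesOn.1 (hG h)).1.2

lemma reach_le {a b : ℕ} (h : Reach G a b) : a ≤ b := by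
  induction h with
  | refl => exact le_refl _
  | tail _ hr ih => exact ih.trans (rel_lt hG hr).le

end
end Std0

namespace Std0
section
variable {n : ℕ} {G : Finset (ℕ × ℕ)}

lemma out_unique (hL : (leftM G).Nodup) {a b c : ℕ}
    (h1 : (a, b) ∈ G) (h2 : (a, c) ∈ G) : b = c := by
  have := Multiset.inj_on_of_nodup_map hL (a, b) h1 (a, c) h2 rfl
  exact congrArg Prod.snd this

lemma in_unique (hR : (rightM G).Nodup) {a b c : ℕ}
    (h1 : (a, c) ∈ G) (h2 : (b, c) ∈ G) : a = b := by
  have := Multiset.inj_on_of_nodup_map hR (a, c) h1 (b, c) h2 rfl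
  exact congrArg Prod.fst this

lemma reach_cases_head {a b : ℕ} (h : Reach G a b) :
    a = b ∨ ∃ c, (a, c) ∈ G ∧ Reach G c b := h.cases_head

/-- backwards confluence: paths into `b` are comparable. -/
lemma back_confluence (hR : (rightM G).Nodup) {x b : ℕ} (hx : Reach G x b) :
    ∀ y, Reach G y b → Reach G x y ∨ Reach G y x := by
  induction hx with
  | refl => exact fun y hy => Or.inr hy
  | @tail c b hxc hcb ih =>
    intro y hy
    rcases hy.cases_tail with rfl | ⟨d, hyd, hdb⟩
    · exact Or.inl (hxc.tail hcb)
    · rcases in_unique hR hdb hcb with rfl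
      exact ih y hyd

/-- forwards confluence: paths out of `b` are comparable. -/
lemma fwd_confluence (hL : (leftM G).Nodup) {b x : ℕ} (hx : Reach G b x) :
    ∀ y, Reach G b y → Reach G x y ∨ Reach G y x := by
  induction hx using Relation.ReflTransGen.head_induction_on with
  | refl => exact fun y hy => Or.inl hy
  | @head a c hac hcx ih =>
    intro y hy
    rcases hy.cases_head with rfl | ⟨d, had, hdy⟩
    · exact Or.inr (Relation.ReflTransGen.head hac hcx)
    · rcases out_unique hL hac had with rfl
      exact ih y hdy

lemma conn_refl (a : ℕ) : Conn G a a := Or.inl Relation.ReflTransGen.refl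
lemma conn_symm {a b : ℕ} (h : Conn G a b) : Conn G b a := h.symm

lemma conn_trans (hL : (leftM G).Nodup) (hR : (rightM G).Nodup) {a b c : ℕ}
    (h1 : Conn G a b) (h2 : Conn G b c) : Conn G a c := by
  rcases h1 with h1 | h1 <;> rcases h2 with h2 | h2
  · exact Or.inl (h1.trans h2)
  · exact back_confluence hR h1 c h2
  · exact fwd_confluence hL h1 c h2
  · exact Or.inr (h2.trans h1)

end
end Std0

namespace Std0
section
variable {n : ℕ} {G : Finset (ℕ × ℕ)}

lemma mem_blockOf {x y : ℕ} :
    y ∈ blockOf n G x ↔ y ∈ Finset.Icc 1 n ∧ Conn G x y := Finset.mem_filter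

lemma invMap_isPartition (hG : G ⊆ edgesOn n) (hL : (leftM G).Nodup)
    (hR : (rightM G).Nodup) : IsPartition n (invMap n G) := by
  refine ⟨?_, ?_, ?_, ?_⟩
  · rintro B hB
    rcases Finset.mem_image.1 hB with ⟨x, hx, rfl⟩
    exact ⟨x, mem_blockOf.2 ⟨hx, conn_refl x⟩⟩
  · rintro B hB
    rcases Finset.mem_image.1 hB with ⟨x, hx, rfl⟩
    exact Finset.filter_subset _ _
  · rintro B hB C hC hne
    rcases Finset.mem_image.1 hB with ⟨x, hx, rfl⟩
    rcases Finset.mem_image.1 hC with ⟨y, hy, rfl⟩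
    rw [Finset.disjoint_left]
    intro z hzB hzC
    apply hne
    rcases mem_blockOf.1 hzB with ⟨hzI, hxz⟩
    rcases mem_blockOf.1 hzC with ⟨_, hyz⟩
    have hxy : Conn G x y := conn_trans hL hR hxz (conn_symm hyz)
    ext w
    simp only [mem_blockOf]
    constructor
    · rintro ⟨hw, h⟩; exact ⟨hw, conn_trans hL hR (conn_symm hxy) h⟩
    · rintro ⟨hw, h⟩; exact ⟨hw, conn_trans hL hR hxy h⟩
  · intro x hx
    exact ⟨blockOf n G x, Finset.mem_image_of_mem _ hx, mem_blockOf.2 ⟨hx, conn_refl x⟩⟩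

lemma stdRep_invMap (hG : G ⊆ edgesOn n) (hL : (leftM G).Nodup)
    (hR : (rightM G).Nodup) : stdRep n (invMap n G) = G := by
  ext ⟨a, b⟩
  simp only [stdRep, Finset.mem_filter]
  constructor
  · rintro ⟨he, B, hB, haB, hbB, hbet⟩
    rcases Finset.mem_image.1 hB with ⟨x, hx, rfl⟩
    have hab : a < b := (mem_edgesOn.1 he).2
    have hconn : Conn G a b :=
      conn_trans hL hR (conn_symm (mem_blockOf.1 haB).2) (mem_blockOf.1 hbB).2
    rcases hconn with h | h
    · -- Reach a b with a < b: first step must land exactly at b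
      rcases h.cases_head with rfl | ⟨d, had, hdb⟩
      · exact absurd rfl hab.ne
      · have hd_le : d ≤ b := reach_le hG hdb
        have had' : a < d := rel_lt hG had
        rcases eq_or_lt_of_le hd_le with rfl | hdb'
        · exact had
        · exfalso
          apply hbet d (mem_blockOf.2 ⟨rel_mem_right hG had,
            conn_trans hL hR (mem_blockOf.1 haB).2 (Or.inl (Relation.ReflTransGen.single had))⟩)
          exact ⟨had', hdb'⟩
    · exact absurd (reach_le hG h) (not_le.2 hab)
  · intro hab
    have he : (a, b) ∈ edgesOn n := hG hab
    have halt : a < b := (mem_edgesOn.1 he).2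
    refine ⟨he, blockOf n G a, Finset.mem_image_of_mem _ (mem_edgesOn.1 he).1.1, ?_, ?_, ?_⟩
    · exact mem_blockOf.2 ⟨(mem_edgesOn.1 he).1.1, conn_refl a⟩
    · exact mem_blockOf.2 ⟨(mem_edgesOn.1 he).1.2,
        Or.inl (Relation.ReflTransGen.single hab)⟩
    · rintro c hc ⟨hac, hcb⟩
      rcases (mem_blockOf.1 hc).2 with h | h
      · rcases h.cases_head with rfl | ⟨d, had, hdc⟩
        · exact lt_irrefl _ hac
        · rcases out_unique hL hab had with rfl
          exact absurd (reach_le hG hdc) (not_le.2 hcb)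
      · exact absurd (reach_le hG h) (not_le.2 hac)

end
end Std0

namespace Std0
section
variable {n : ℕ} {π : Finset (Finset ℕ)}

lemma block_unique (hπ : IsPartition n π) {B C : Finset ℕ} {a : ℕ}
    (hB : B ∈ π) (hC : C ∈ π) (haB : a ∈ B) (haC : a ∈ C) : B = C := by
  by_contra hne
  exact (Finset.disjoint_left.1 (hπ.2.2.1 B hB C hC hne) haB) haC

lemma stdRep_subset_edgesOn : stdRep n π ⊆ edgesOn n := Finset.filter_subset _ _

lemma reach_in_block (hπ : IsPartition n π) {B : Finset ℕ} (hB : B ∈ π) :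
    ∀ k a b, a ∈ B → b ∈ B → a ≤ b → b - a ≤ k → Reach (stdRep n π) a b := by
  intro k
  induction k with
  | zero =>
    intro a b haB hbB hab h0
    have : a = b := le_antisymm hab (by omega)
    subst this; exact Relation.ReflTransGen.refl
  | succ k ih =>
    intro a b haB hbB hab hk
    rcases eq_or_lt_of_le hab with rfl | hlt
    · exact Relation.ReflTransGen.refl
    · set S := B.filter (fun z => a < z) with hS
      have hbS : b ∈ S := Finset.mem_filter.2 ⟨hbB, hlt⟩
      have hSne : S.Nonempty := ⟨b, hbS⟩
      set c := S.min' hSne with hc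
      have hcS : c ∈ S := S.min'_mem hSne
      have hcB : c ∈ B := (Finset.mem_filter.1 hcS).1
      have hac : a < c := (Finset.mem_filter.1 hcS).2
      have hcb : c ≤ b := S.min'_le b hbS
      have hedge : (a, c) ∈ stdRep n π := by
        refine Finset.mem_filter.2 ⟨mem_edgesOn.2 ⟨⟨hπ.2.1 B hB haB, hπ.2.1 B hB hcB⟩, hac⟩,
          B, hB, haB, hcB, ?_⟩
        rintro z hzB ⟨haz, hzc⟩
        exact absurd (S.min'_le z (Finset.mem_filter.2 ⟨hzB, haz⟩)) (not_le.2 hzc)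
      exact Relation.ReflTransGen.head hedge (ih c b hcB hbB hcb (by omega))

lemma reach_block_iff (hπ : IsPartition n π) {B : Finset ℕ} (hB : B ∈ π) {a b : ℕ}
    (h : Reach (stdRep n π) a b) : (a ∈ B ↔ b ∈ B) := by
  induction h with
  | refl => exact Iff.rfl
  | @tail c d hac hcd ihc =>
    rcases Finset.mem_filter.1 hcd with ⟨_, D, hD, hcD, hdD, _⟩
    rw [ihc]
    constructor
    · intro hc; rw [block_unique hπ hB hD hc hcD]; exact hdD
    · intro hd; rw [block_unique hπ hB hD hd hdD]; exact hcD

lemma invMap_stdRep (hπ : IsPartition n π) : invMap n (stdRep n π) = π := by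
  have key : ∀ (B : Finset ℕ), B ∈ π → ∀ x ∈ B, blockOf n (stdRep n π) x = B := by
    intro B hB x hxB
    ext y
    rw [mem_blockOf]
    constructor
    · rintro ⟨hy, h | h⟩
      · exact (reach_block_iff hπ hB h).1 hxB
      · -- Reach y x; x ∈ B → y ∈ B
        exact (reach_block_iff hπ hB h).2 hxB
    · intro hyB
      refine ⟨hπ.2.1 B hB hyB, ?_⟩
      rcases le_total x y with h | h
      · exact Or.inl (reach_in_block hπ hB (y - x) x y hxB hyB h le_rfl)
      · exact Or.inr (reach_in_block hπ hB (x - y) y x hyB hxB h le_rfl)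
  ext C
  constructor
  · intro hC
    rcases Finset.mem_image.1 hC with ⟨x, hx, rfl⟩
    rcases hπ.2.2.2 x hx with ⟨B, hB, hxB⟩
    rw [key B hB x hxB]; exact hB
  · intro hC
    rcases hπ.1 C hC with ⟨x, hxC⟩
    exact Finset.mem_image.2 ⟨x, hπ.2.1 C hC hxC, key C hC x hxC⟩

end
end Std0

namespace Std0
section
variable {n : ℕ} {π : Finset (Finset ℕ)}

lemma leftM_stdRep_nodup (hπ : IsPartition n π) : (leftM (stdRep n π)).Nodup := by
  refine Multiset.Nodup.map_on ?_ (stdRep n π).nodup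
  rintro ⟨a, b⟩ he ⟨a', c⟩ hf (h : a = a')
  subst h
  rcases Finset.mem_filter.1 he with ⟨heE, B, hB, haB, hbB, hbet⟩
  rcases Finset.mem_filter.1 hf with ⟨hfE, C, hC, haC, hcC, hcet⟩
  have hBC := block_unique hπ hB hC haB haC
  subst hBC
  have hab : a < b := (mem_edgesOn.1 heE).2
  have hac : a < c := (mem_edgesOn.1 hfE).2
  have : b = c := by
    rcases lt_trichotomy b c with h | h | h
    · exact absurd ⟨hab, h⟩ (hcet b hbB)
    · exact h
    · exact absurd ⟨hac, h⟩ (hbet c hcC)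
  rw [this]

lemma rightM_stdRep_nodup (hπ : IsPartition n π) : (rightM (stdRep n π)).Nodup := by
  refine Multiset.Nodup.map_on ?_ (stdRep n π).nodup
  rintro ⟨a, c⟩ he ⟨b, c'⟩ hf (h : c = c')
  subst h
  rcases Finset.mem_filter.1 he with ⟨heE, B, hB, haB, hcB, hbet⟩
  rcases Finset.mem_filter.1 hf with ⟨hfE, C, hC, hbC, hcC, hcet⟩
  have hBC := block_unique hπ hB hC hcB hcC
  subst hBC
  have hac : a < c := (mem_edgesOn.1 heE).2
  have hbc : b < c := (mem_edgesOn.1 hfE).2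
  have : a = b := by
    rcases lt_trichotomy a b with h | h | h
    · exact absurd ⟨h, hbc⟩ (hbet b hbC)
    · exact h
    · exact absurd ⟨h, hac⟩ (hcet a haB)
  rw [this]

end
end Std0


/-- The standard representation is a bijection between set partitions of `[n]` and
simple graphs on `[n]` in which every left endpoint and every right endpoint has
multiplicity one. -/
theorem stdRep_bijective (n : ℕ) :
    Set.BijOn (stdRep n) {π | IsPartition n π}
      {G | G ⊆ edgesOn n ∧ (leftM G).Nodup ∧ (rightM G).Nodup} := by
  refine ⟨?_, ?_, ?_⟩
  · intro π hπ
    exact ⟨Std0.stdRep_subset_edgesOn, Std0.leftM_stdRep_nodup hπ, Std0.rightM_stdRep_nodup hπ⟩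
  · intro π hπ π' hπ' h
    have := congrArg (Std0.invMap n) h
    rwa [Std0.invMap_stdRep hπ, Std0.invMap_stdRep hπ'] at this
  · rintro G ⟨hG, hL, hR⟩
    exact ⟨Std0.invMap n G, Std0.invMap_isPartition hG hL hR, Std0.stdRep_invMap hG hL hR⟩
end

section
/- For n ≥ 5, the number of arbitrary 01-fillings of the staircase (triangular Ferrers) diagram Δ_n with exactly C(n,4) descents equals 2^n, while the number with exactly C(n,4) ascents equals 16; in particular the joint distribution of (ne₂, se₂) over all 01-fillings of Δ_n is not symmetric for n ≥ 5. -/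
/-- The cells of the staircase (triangular Ferrers) diagram `Δ_n`: cells `(i,j)` with
`1 ≤ i < j ≤ n`. -/
def deltaCells (n : ℕ) : Finset (ℕ × ℕ) :=
  (Finset.Icc 1 n ×ˢ Finset.Icc 1 n).filter fun e => e.1 < e.2

/-- Number of ascents of a filling `F` of `Δ_n`: pairs of `1`s, one strictly above and
to the right of the other, such that the smallest rectangle containing both lies in
`Δ_n`. (Under the arc ↔ cell correspondence, ascents correspond to 2-nestings.) -/
def ne2Δ (n : ℕ) (F : Finset (ℕ × ℕ)) : ℕ :=
  ((F ×ˢ F).filter fun p => p.1.1 < p.2.1 ∧ p.2.2 < p.1.2 ∧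
    ∀ a ∈ Finset.Icc p.1.1 p.2.1, ∀ b ∈ Finset.Icc p.2.2 p.1.2,
      (a, b) ∈ deltaCells n).card

/-- Number of descents of a filling `F` of `Δ_n`: pairs of `1`s, one strictly below and
to the right of the other, with enclosing rectangle inside `Δ_n`. (Descents correspond
to 2-crossings.) -/
def se2Δ (n : ℕ) (F : Finset (ℕ × ℕ)) : ℕ :=
  ((F ×ˢ F).filter fun p => p.1.1 < p.2.1 ∧ p.1.2 < p.2.2 ∧
    ∀ a ∈ Finset.Icc p.1.1 p.2.1, ∀ b ∈ Finset.Icc p.1.2 p.2.2,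
      (a, b) ∈ deltaCells n).card

open Finset

lemma mem_deltaCells {n : ℕ} {c : ℕ × ℕ} :
    c ∈ deltaCells n ↔ 1 ≤ c.1 ∧ c.1 < c.2 ∧ c.2 ≤ n := by
  simp [deltaCells, Finset.mem_Icc]
  omega

def quadT (n : ℕ) : Finset ((ℕ × ℕ) × (ℕ × ℕ)) :=
  ((Finset.Icc 1 n ×ˢ Finset.Icc 1 n) ×ˢ (Finset.Icc 1 n ×ˢ Finset.Icc 1 n)).filter
    fun q => q.1.1 < q.1.2 ∧ q.1.2 < q.2.1 ∧ q.2.1 < q.2.2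

lemma mem_quadT {n : ℕ} {q : (ℕ × ℕ) × (ℕ × ℕ)} :
    q ∈ quadT n ↔ 1 ≤ q.1.1 ∧ q.1.1 < q.1.2 ∧ q.1.2 < q.2.1 ∧ q.2.1 < q.2.2 ∧ q.2.2 ≤ n := by
  simp [quadT, Finset.mem_Icc]
  omega

lemma quadT_card (n : ℕ) : (quadT n).card = n.choose 4 := by
  have h : (quadT n).card = (Finset.powersetCard 4 (Finset.Icc 1 n)).card := by
    apply Finset.card_bij (fun q _ => ({q.1.1, q.1.2, q.2.1, q.2.2} : Finset ℕ))
    · rintro ⟨⟨a, b⟩, c, d⟩ hq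
      rw [mem_quadT] at hq
      simp only at hq
      rw [Finset.mem_powersetCard]
      constructor
      · intro x hx
        simp only [mem_insert, mem_singleton] at hx
        rw [Finset.mem_Icc]
        omega
      · rw [card_insert_of_notMem (by simp; omega),
          card_insert_of_notMem (by simp; omega),
          card_insert_of_notMem (by simp; omega), card_singleton]
    · rintro ⟨⟨a, b⟩, c, d⟩ hq ⟨⟨a', b'⟩, c', d'⟩ hq' h
      rw [mem_quadT] at hq hq'
      simp only at hq hq'
      have h1 : a ∈ ({a', b', c', d'} : Finset ℕ) := h ▸ (by simp)
      have h2 : b ∈ ({a', b', c', d'} : Finset ℕ) := h ▸ (by simp)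
      have h3 : c ∈ ({a', b', c', d'} : Finset ℕ) := h ▸ (by simp)
      have h4 : d ∈ ({a', b', c', d'} : Finset ℕ) := h ▸ (by simp)
      have h5 : a' ∈ ({a, b, c, d} : Finset ℕ) := h ▸ (by simp)
      have h6 : b' ∈ ({a, b, c, d} : Finset ℕ) := h ▸ (by simp)
      have h7 : c' ∈ ({a, b, c, d} : Finset ℕ) := h ▸ (by simp)
      have h8 : d' ∈ ({a, b, c, d} : Finset ℕ) := h ▸ (by simp)
      simp only [mem_insert, mem_singleton] at h1 h2 h3 h4 h5 h6 h7 h8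
      have : a = a' ∧ b = b' ∧ c = c' ∧ d = d' := by omega
      simp [this.1, this.2.1, this.2.2.1, this.2.2.2]
    · intro s hs
      rw [Finset.mem_powersetCard] at hs
      obtain ⟨hsub, hcard⟩ := hs
      have hlen : (s.sort (· ≤ ·)).length = 4 := by
        rw [Finset.length_sort]; exact hcard
      have hsorted := (Finset.sortedLT_sort s).pairwise
      have htf := Finset.sort_toFinset s (· ≤ ·)
      rcases hls : s.sort (· ≤ ·) with _ | ⟨a, _ | ⟨b, _ | ⟨c, _ | ⟨d, _ | e⟩⟩⟩⟩ <;>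
        rw [hls] at hlen <;> simp at hlen
      rw [hls] at hsorted htf
      simp only [List.pairwise_cons, List.mem_cons, List.not_mem_nil, or_false,
        List.mem_singleton, List.Pairwise.nil, and_true] at hsorted
      have ha : a ∈ s := by rw [← htf]; simp
      have hb : b ∈ s := by rw [← htf]; simp
      have hc : c ∈ s := by rw [← htf]; simp
      have hd : d ∈ s := by rw [← htf]; simp
      have hba := Finset.mem_Icc.mp (hsub ha)
      have hbb := Finset.mem_Icc.mp (hsub hb)
      have hbc := Finset.mem_Icc.mp (hsub hc)
      have hbd := Finset.mem_Icc.mp (hsub hd)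
      refine ⟨((a, b), (c, d)), ?_, ?_⟩
      · rw [mem_quadT]
        simp only
        constructor
        · exact hba.1
        refine ⟨?_, ?_, ?_, hbd.2⟩
        · exact hsorted.1 b (Or.inl rfl)
        · exact hsorted.2.1 c (Or.inl rfl)
        · exact hsorted.2.2.1 d rfl
      · rw [← htf]
        simp
  rw [h, Finset.card_powersetCard, Nat.card_Icc]
  simp

lemma se2_eq (n : ℕ) (F : Finset (ℕ × ℕ)) :
    se2Δ n F = ((quadT n).filter fun q => (q.1.1, q.2.1) ∈ F ∧ (q.1.2, q.2.2) ∈ F).card := by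
  unfold se2Δ
  apply Finset.card_nbij' (fun p => ((p.1.1, p.2.1), (p.1.2, p.2.2)))
      (fun q => ((q.1.1, q.2.1), (q.1.2, q.2.2)))
  · rintro ⟨⟨i1, j1⟩, i2, j2⟩ hp
    simp only [Finset.mem_coe, Finset.mem_filter, Finset.mem_product] at hp
    obtain ⟨⟨hF1, hF2⟩, h12, h34, hrect⟩ := hp
    have hc1 := hrect i1 (by simp [Finset.mem_Icc]; omega) j1 (by simp [Finset.mem_Icc]; omega)
    have hc2 := hrect i2 (by simp [Finset.mem_Icc]; omega) j1 (by simp [Finset.mem_Icc]; omega)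
    have hc3 := hrect i2 (by simp [Finset.mem_Icc]; omega) j2 (by simp [Finset.mem_Icc]; omega)
    rw [mem_deltaCells] at hc1 hc2 hc3
    simp only at hc1 hc2 hc3
    simp only [Finset.mem_coe, Finset.mem_filter, mem_quadT]
    exact ⟨⟨by omega, by omega, by omega, by omega, by omega⟩, hF1, hF2⟩
  · rintro ⟨⟨a, b⟩, c, d⟩ hq
    simp only [Finset.mem_coe, Finset.mem_filter, mem_quadT] at hq
    obtain ⟨⟨ha, hab, hbc, hcd, hd⟩, hF1, hF2⟩ := hq
    simp only [Finset.mem_coe, Finset.mem_filter, Finset.mem_product]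
    refine ⟨⟨hF1, hF2⟩, by omega, by omega, ?_⟩
    intro x hx y hy
    rw [Finset.mem_Icc] at hx hy
    rw [mem_deltaCells]
    simp only at hx hy ⊢
    omega
  · rintro ⟨⟨i1, j1⟩, i2, j2⟩ _; rfl
  · rintro ⟨⟨a, b⟩, c, d⟩ _; rfl

lemma ne2_eq (n : ℕ) (F : Finset (ℕ × ℕ)) :
    ne2Δ n F = ((quadT n).filter fun q => (q.1.1, q.2.2) ∈ F ∧ (q.1.2, q.2.1) ∈ F).card := by
  unfold ne2Δ
  apply Finset.card_nbij' (fun p => ((p.1.1, p.2.1), (p.2.2, p.1.2)))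
      (fun q => ((q.1.1, q.2.2), (q.1.2, q.2.1)))
  · rintro ⟨⟨i1, j1⟩, i2, j2⟩ hp
    simp only [Finset.mem_coe, Finset.mem_filter, Finset.mem_product] at hp
    obtain ⟨⟨hF1, hF2⟩, h12, h34, hrect⟩ := hp
    have hc1 := hrect i1 (by simp [Finset.mem_Icc]; omega) j2 (by simp [Finset.mem_Icc]; omega)
    have hc2 := hrect i2 (by simp [Finset.mem_Icc]; omega) j2 (by simp [Finset.mem_Icc]; omega)
    have hc3 := hrect i1 (by simp [Finset.mem_Icc]; omega) j1 (by simp [Finset.mem_Icc]; omega)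
    rw [mem_deltaCells] at hc1 hc2 hc3
    simp only at hc1 hc2 hc3
    simp only [Finset.mem_coe, Finset.mem_filter, mem_quadT]
    exact ⟨⟨by omega, by omega, by omega, by omega, by omega⟩, hF1, hF2⟩
  · rintro ⟨⟨a, b⟩, c, d⟩ hq
    simp only [Finset.mem_coe, Finset.mem_filter, mem_quadT] at hq
    obtain ⟨⟨ha, hab, hbc, hcd, hd⟩, hF1, hF2⟩ := hq
    simp only [Finset.mem_coe, Finset.mem_filter, Finset.mem_product]
    refine ⟨⟨hF1, hF2⟩, by omega, by omega, ?_⟩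
    intro x hx y hy
    rw [Finset.mem_Icc] at hx hy
    rw [mem_deltaCells]
    simp only at hx hy ⊢
    omega
  · rintro ⟨⟨i1, j1⟩, i2, j2⟩ _; rfl
  · rintro ⟨⟨a, b⟩, c, d⟩ _; rfl

-- ## Real work starts here

lemma se2_le (n : ℕ) (F : Finset (ℕ × ℕ)) : se2Δ n F ≤ n.choose 4 := by
  rw [se2_eq, ← quadT_card n]
  exact Finset.card_le_card (Finset.filter_subset _ _)

lemma ne2_le (n : ℕ) (F : Finset (ℕ × ℕ)) : ne2Δ n F ≤ n.choose 4 := by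
  rw [ne2_eq, ← quadT_card n]
  exact Finset.card_le_card (Finset.filter_subset _ _)

def forcedSE (n : ℕ) : Finset (ℕ × ℕ) :=
  (deltaCells n).filter fun c => ¬(c.2 = c.1 + 1 ∨ (c.1 = 1 ∧ c.2 = n))

def forcedNE (n : ℕ) : Finset (ℕ × ℕ) :=
  (deltaCells n).filter fun c => c.1 + 3 ≤ c.2 ∨ (2 ≤ c.1 ∧ c.2 + 1 ≤ n)

lemma filter_eq_quadT_iff {n : ℕ} {p : (ℕ × ℕ) × (ℕ × ℕ) → Prop} [DecidablePred p] :
    ((quadT n).filter p).card = n.choose 4 ↔ ∀ q ∈ quadT n, p q := by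
  rw [← quadT_card n, ← Finset.filter_eq_self (p := p)]
  constructor
  · intro h
    exact Finset.eq_of_subset_of_card_le (Finset.filter_subset _ _) h.ge
  · intro h
    rw [h]

lemma se2_max_iff {n : ℕ} (hn : 5 ≤ n) (F : Finset (ℕ × ℕ)) :
    se2Δ n F = n.choose 4 ↔ forcedSE n ⊆ F := by
  rw [se2_eq, filter_eq_quadT_iff]
  constructor
  · intro h c hc
    obtain ⟨i, j⟩ := c
    simp only [forcedSE, Finset.mem_filter, mem_deltaCells] at hc
    obtain ⟨⟨hi, hij, hj⟩, hfree⟩ := hc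
    by_cases hcase : j + 1 ≤ n
    · exact (h ((i, i + 1), (j, j + 1)) (by rw [mem_quadT]; simp only; omega)).1
    · exact (h ((i - 1, i), (i + 1, j)) (by rw [mem_quadT]; simp only; omega)).2
  · intro h q hq
    rw [mem_quadT] at hq
    constructor <;> apply h <;>
      simp only [forcedSE, Finset.mem_filter, mem_deltaCells] <;> omega

lemma ne2_max_iff {n : ℕ} (hn : 5 ≤ n) (F : Finset (ℕ × ℕ)) :
    ne2Δ n F = n.choose 4 ↔ forcedNE n ⊆ F := by
  rw [ne2_eq, filter_eq_quadT_iff]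
  constructor
  · intro h c hc
    obtain ⟨i, j⟩ := c
    simp only [forcedNE, Finset.mem_filter, mem_deltaCells] at hc
    obtain ⟨⟨hi, hij, hj⟩, hforce⟩ := hc
    rcases hforce with h3 | ⟨h2i, h2j⟩
    · exact (h ((i, i + 1), (i + 2, j)) (by rw [mem_quadT]; simp only; omega)).1
    · exact (h ((i - 1, i), (j, j + 1)) (by rw [mem_quadT]; simp only; omega)).2
  · intro h q hq
    rw [mem_quadT] at hq
    constructor <;> apply h <;>
      simp only [forcedNE, Finset.mem_filter, mem_deltaCells] <;> omega

lemma count_max {n : ℕ} (forced : Finset (ℕ × ℕ)) (hsub : forced ⊆ deltaCells n)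
    (f : Finset (ℕ × ℕ) → ℕ) (hiff : ∀ F, f F = n.choose 4 ↔ forced ⊆ F) :
    ((deltaCells n).powerset.filter fun F => f F = n.choose 4).card
      = 2 ^ ((deltaCells n).card - forced.card) := by
  have heq : (deltaCells n).powerset.filter (fun F => f F = n.choose 4)
      = Finset.Icc forced (deltaCells n) := by
    ext F
    simp only [Finset.mem_filter, Finset.mem_powerset, Finset.mem_Icc,
      ← Finset.le_iff_subset, hiff]
    tauto
  rw [heq, Finset.card_Icc_finset hsub]

lemma freeSE_card {n : ℕ} (hn : 5 ≤ n) :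
    (deltaCells n).card - (forcedSE n).card = n := by
  have hsplit := Finset.card_filter_add_card_filter_not
    (s := deltaCells n) (p := fun c => ¬(c.2 = c.1 + 1 ∨ (c.1 = 1 ∧ c.2 = n)))
  have hfree : (deltaCells n).filter
      (fun c => ¬¬(c.2 = c.1 + 1 ∨ (c.1 = 1 ∧ c.2 = n)))
      = insert (1, n) ((Finset.Icc 1 (n - 1)).image fun i => (i, i + 1)) := by
    ext ⟨i, j⟩
    simp only [Finset.mem_filter, mem_deltaCells, not_not, Finset.mem_insert,
      Finset.mem_image, Finset.mem_Icc, Prod.mk.injEq]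
    constructor
    · rintro ⟨⟨hi, hij, hj⟩, hor⟩
      rcases hor with h1 | ⟨h2, h3⟩
      · right; exact ⟨i, by omega, rfl, by omega⟩
      · left; exact ⟨h2, h3⟩
    · rintro (⟨h1, h2⟩ | ⟨k, hk, hk1, hk2⟩) <;>
        refine ⟨⟨?_, ?_, ?_⟩, ?_⟩ <;> omega
  have hcard : ((deltaCells n).filter
      (fun c => ¬¬(c.2 = c.1 + 1 ∨ (c.1 = 1 ∧ c.2 = n)))).card = n := by
    rw [hfree, Finset.card_insert_of_notMem, Finset.card_image_of_injective,
      Nat.card_Icc]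
    · omega
    · intro x y hxy
      simpa using hxy
    · simp only [Finset.mem_image, Finset.mem_Icc, Prod.mk.injEq, not_exists]
      intro k
      omega
  unfold forcedSE
  omega

lemma freeNE_card {n : ℕ} (hn : 5 ≤ n) :
    (deltaCells n).card - (forcedNE n).card = 4 := by
  have hsplit := Finset.card_filter_add_card_filter_not
    (s := deltaCells n) (p := fun c => c.1 + 3 ≤ c.2 ∨ (2 ≤ c.1 ∧ c.2 + 1 ≤ n))
  have hfree : (deltaCells n).filter
      (fun c => ¬(c.1 + 3 ≤ c.2 ∨ (2 ≤ c.1 ∧ c.2 + 1 ≤ n)))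
      = {(1, 2), (1, 3), (n - 2, n), (n - 1, n)} := by
    ext ⟨i, j⟩
    simp only [Finset.mem_filter, mem_deltaCells, Finset.mem_insert,
      Finset.mem_singleton, Prod.mk.injEq]
    omega
  have hcard : ((deltaCells n).filter
      (fun c => ¬(c.1 + 3 ≤ c.2 ∨ (2 ≤ c.1 ∧ c.2 + 1 ≤ n)))).card = 4 := by
    rw [hfree]
    rw [Finset.card_insert_of_notMem (by simp [Prod.ext_iff]; omega),
      Finset.card_insert_of_notMem (by simp [Prod.ext_iff]; omega),
      Finset.card_insert_of_notMem (by simp [Prod.ext_iff]; omega),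
      Finset.card_singleton]
  unfold forcedNE
  omega

/-- For `n ≥ 5`, the number of arbitrary 01-fillings of `Δ_n` with exactly `C(n,4)`
descents is `2^n`, the number with exactly `C(n,4)` ascents is `16`, and consequently
the joint distribution of `(ne₂, se₂)` over all 01-fillings of `Δ_n` is not
symmetric. -/
theorem arbitrary_fillings_not_symmetric (n : ℕ) (hn : 5 ≤ n) :
    ((deltaCells n).powerset.filter fun F => se2Δ n F = n.choose 4).card = 2 ^ n ∧
    ((deltaCells n).powerset.filter fun F => ne2Δ n F = n.choose 4).card = 16 ∧
    ¬(∀ k ℓ : ℕ,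
      ((deltaCells n).powerset.filter fun F => ne2Δ n F = k ∧ se2Δ n F = ℓ).card =
      ((deltaCells n).powerset.filter fun F => ne2Δ n F = ℓ ∧ se2Δ n F = k).card) := by
  have hsubSE : forcedSE n ⊆ deltaCells n := Finset.filter_subset _ _
  have hsubNE : forcedNE n ⊆ deltaCells n := Finset.filter_subset _ _
  have hSE : ((deltaCells n).powerset.filter fun F => se2Δ n F = n.choose 4).card = 2 ^ n := by
    rw [count_max (forcedSE n) hsubSE (se2Δ n) (se2_max_iff hn), freeSE_card hn]
  have hNE : ((deltaCells n).powerset.filter fun F => ne2Δ n F = n.choose 4).card = 16 := by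
    rw [count_max (forcedNE n) hsubNE (ne2Δ n) (ne2_max_iff hn), freeNE_card hn]
    norm_num
  refine ⟨hSE, hNE, ?_⟩
  intro H
  set K := n.choose 4 with hK
  set s := (deltaCells n).powerset with hs
  have hA : (s.filter fun F => ne2Δ n F = K).card
      = ∑ ℓ ∈ Finset.range (K + 1), (s.filter fun F => ne2Δ n F = K ∧ se2Δ n F = ℓ).card := by
    rw [Finset.card_eq_sum_card_fiberwise
      (f := se2Δ n) (t := Finset.range (K + 1))
      (fun F _ => Finset.mem_range.mpr (Nat.lt_succ_of_le (se2_le n F)))]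
    exact Finset.sum_congr rfl fun ℓ _ => by rw [Finset.filter_filter]
  have hB : (s.filter fun F => se2Δ n F = K).card
      = ∑ ℓ ∈ Finset.range (K + 1), (s.filter fun F => ne2Δ n F = ℓ ∧ se2Δ n F = K).card := by
    rw [Finset.card_eq_sum_card_fiberwise
      (f := ne2Δ n) (t := Finset.range (K + 1))
      (fun F _ => Finset.mem_range.mpr (Nat.lt_succ_of_le (ne2_le n F)))]
    refine Finset.sum_congr rfl fun ℓ _ => ?_
    rw [Finset.filter_filter]
    congr 1
    apply Finset.filter_congr
    intro F _
    tauto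
  have hAB : (s.filter fun F => ne2Δ n F = K).card = (s.filter fun F => se2Δ n F = K).card := by
    rw [hA, hB]
    exact Finset.sum_congr rfl fun ℓ _ => H K ℓ
  rw [hNE, hSE] at hAB
  have : 2 ^ 5 ≤ 2 ^ n := Nat.pow_le_pow_right (by norm_num) hn
  omega
end
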